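/- arXiv:0907.2049 — 10 statements merged into one kernel-verified Lean document; each statement's English description precedes it below -/
import Mathlib

section
/- Let (X,d) be a metric space, let n ≥ 1, let x_1,…,x_n ∈ X and let y ∈ X. Then ∑_{i=1}^n ∑_{j=1}^n d(x_i,x_j) ≤ (2n−2) · ∑_{i=1}^n d(x_i,y). (Consequently the Random Dictator mechanism, whose expected social cost is (1/n)∑_i∑_j d(x_i,x_j), is a (2−2/n)-approximation of the optimal social cost min_y ∑_i d(x_i,y).) -/
/-- **Random Dictator is a (2-2/n)-approximation for the social cost in any metric space.**
For points `x 1, …, x n` in a metric space and any point `y`,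
`∑ i ∑ j d(x i, x j) ≤ (2n - 2) · ∑ i d(x i, y)`. -/
theorem random_dictator_social_cost_approx {X : Type*} [MetricSpace X] {n : ℕ}
    (hn : 1 ≤ n) (x : Fin n → X) (y : X) :
    ∑ i : Fin n, ∑ j : Fin n, dist (x i) (x j) ≤
      (2 * (n : ℝ) - 2) * ∑ i : Fin n, dist (x i) y := by
  set S := ∑ i : Fin n, dist (x i) y with hS
  have h1 : ∑ i : Fin n, ∑ j : Fin n, dist (x i) (x j)
      = ∑ i : Fin n, ∑ j ∈ Finset.univ.erase i, dist (x i) (x j) := by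
    refine Finset.sum_congr rfl fun i _ => ?_
    exact (Finset.sum_erase Finset.univ (by simp)).symm
  have h2 : ∀ i : Fin n, ∑ j ∈ Finset.univ.erase i, dist (x i) (x j)
      ≤ ∑ j ∈ Finset.univ.erase i, (dist (x i) y + dist (x j) y) := by
    intro i
    exact Finset.sum_le_sum fun j _ => dist_triangle_right _ _ _
  have h3 : ∀ i : Fin n, ∑ j ∈ Finset.univ.erase i, (dist (x i) y + dist (x j) y)
      = ((n : ℝ) - 1) * dist (x i) y + (S - dist (x i) y) := by
    intro i
    rw [Finset.sum_add_distrib, Finset.sum_const, Finset.card_erase_of_mem (Finset.mem_univ i)]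
    simp only [Finset.card_univ, Fintype.card_fin, nsmul_eq_mul]
    rw [Finset.sum_erase_eq_sub (Finset.mem_univ i)]
    push_cast [Nat.cast_sub hn]
    ring_nf
    rw [← hS]
  calc ∑ i : Fin n, ∑ j : Fin n, dist (x i) (x j)
      ≤ ∑ i : Fin n, (((n : ℝ) - 1) * dist (x i) y + (S - dist (x i) y)) := by
        rw [h1]; exact Finset.sum_le_sum fun i _ => (h2 i).trans_eq (h3 i)
    _ = (2 * (n : ℝ) - 2) * S := by
        rw [Finset.sum_add_distrib, ← Finset.mul_sum, Finset.sum_sub_distrib,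
          Finset.sum_const, ← hS]
        simp only [Finset.card_univ, Fintype.card_fin, nsmul_eq_mul]
        ring
end

section
/- Let (X,d) be a metric space, let n ≥ 2, let y,z ∈ X, and define x_1 = y and x_i = z for all i = 2,…,n. Then ∑_{i=1}^n ∑_{j=1}^n d(x_i,x_j) = (2n−2) · d(y,z), and for every w ∈ X, ∑_{i=1}^n d(x_i,w) ≥ d(y,z). (Hence the Random Dictator mechanism has expected social cost exactly (2−2/n) times the optimal social cost on this profile, so the (2−2/n) analysis is tight.) -/
/-- **Tightness of the (2-2/n) approximation analysis of Random Dictator.**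
For the profile with one agent at `y` and `n-1` agents at `z`,
the sum `∑ i ∑ j d(x i, x j)` equals `(2n-2)·d(y,z)`, while the optimal
social cost is at least `d(y,z)`. -/
theorem random_dictator_social_cost_tight {X : Type*} [MetricSpace X] {n : ℕ}
    (hn : 2 ≤ n) (y z : X) (x : Fin n → X)
    (hx : ∀ i : Fin n, x i = if (i : ℕ) = 0 then y else z) :
    (∑ i : Fin n, ∑ j : Fin n, dist (x i) (x j) = (2 * (n : ℝ) - 2) * dist y z) ∧
    ∀ w : X, dist y z ≤ ∑ i : Fin n, dist (x i) w := by
  have hn0 : 0 < n := by omega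
  set i0 : Fin n := ⟨0, by omega⟩ with hi0
  set i1 : Fin n := ⟨1, by omega⟩ with hi1
  have card0 : (Finset.univ.filter (fun j : Fin n => (j : ℕ) = 0)).card = 1 := by
    have : Finset.univ.filter (fun j : Fin n => (j : ℕ) = 0) = {i0} := by
      ext j; simp [Fin.ext_iff, hi0]
    rw [this, Finset.card_singleton]
  have card1 : (Finset.univ.filter (fun j : Fin n => ¬ (j : ℕ) = 0)).card = n - 1 := by
    have := Finset.card_filter_add_card_filter_not
      (s := (Finset.univ : Finset (Fin n))) (p := fun j : Fin n => (j : ℕ) = 0)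
    simp only [Finset.card_univ, Fintype.card_fin] at this
    omega
  have key : ∀ c1 c2 : ℝ, ∑ j : Fin n, (if (j : ℕ) = 0 then c1 else c2)
      = c1 + ((n : ℝ) - 1) * c2 := by
    intro c1 c2
    rw [Finset.sum_ite, Finset.sum_const, Finset.sum_const, card0, card1]
    have : ((n - 1 : ℕ) : ℝ) = (n : ℝ) - 1 := by
      push_cast [Nat.cast_sub (by omega : 1 ≤ n)]; ring
    simp [nsmul_eq_mul, this]
  constructor
  · have inner : ∀ i : Fin n, ∑ j : Fin n, dist (x i) (x j)
        = dist (x i) y + ((n : ℝ) - 1) * dist (x i) z := by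
      intro i
      have : ∀ j : Fin n, dist (x i) (x j)
          = if (j : ℕ) = 0 then dist (x i) y else dist (x i) z := by
        intro j; rw [hx j]; split <;> rfl
      rw [Finset.sum_congr rfl (fun j _ => this j), key]
    rw [Finset.sum_congr rfl (fun i _ => inner i)]
    have : ∀ i : Fin n, dist (x i) y + ((n : ℝ) - 1) * dist (x i) z
        = if (i : ℕ) = 0 then ((n : ℝ) - 1) * dist y z else dist z y := by
      intro i; rw [hx i]; split <;> simp
    rw [Finset.sum_congr rfl (fun i _ => this i), key, dist_comm z y]
    ring
  · intro w
    have h01 : i0 ≠ i1 := by simp [hi0, hi1, Fin.ext_iff]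
    have hsub : ({i0, i1} : Finset (Fin n)) ⊆ Finset.univ := Finset.subset_univ _
    have hs : ∑ i ∈ ({i0, i1} : Finset (Fin n)), dist (x i) w
        ≤ ∑ i : Fin n, dist (x i) w :=
      Finset.sum_le_sum_of_subset_of_nonneg hsub (fun i _ _ => dist_nonneg)
    rw [Finset.sum_pair h01] at hs
    have hx0 : x i0 = y := by rw [hx]; simp [hi0]
    have hx1 : x i1 = z := by rw [hx]; simp [hi1]
    calc dist y z ≤ dist y w + dist w z := dist_triangle _ _ _
      _ = dist (x i0) w + dist (x i1) w := by rw [hx0, hx1, dist_comm w z]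
      _ ≤ _ := hs
end

section
/- Let x_1,…,x_n ∈ ℝ and y_1,…,y_n ∈ ℝ. Then there exists an index i ∈ {1,…,n} such that ∑_{k=1}^n |x_i − x_k| ≤ ∑_{k=1}^n |x_i − y_k|; in fact i can be chosen to be an index attaining min_k x_k or one attaining max_k x_k. (This is group strategyproofness of the Random Dictator mechanism on a line.) -/
/-- **Group strategyproofness of the Random Dictator mechanism on a line.**
For reals `x 1, …, x n` and `y 1, …, y n`, there exists an index `i`, which can be
chosen to attain `min_k x k` or `max_k x k`, such that
`∑ k |x i - x k| ≤ ∑ k |x i - y k|`. -/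
theorem random_dictator_gsp_line {n : ℕ} (hn : 1 ≤ n) (x y : Fin n → ℝ) :
    ∃ i : Fin n, ((∀ k, x i ≤ x k) ∨ (∀ k, x k ≤ x i)) ∧
      ∑ k : Fin n, |x i - x k| ≤ ∑ k : Fin n, |x i - y k| := by
  haveI : NeZero n := ⟨by omega⟩
  have hne : (Finset.univ : Finset (Fin n)).Nonempty := Finset.univ_nonempty
  obtain ⟨im, -, him⟩ := Finset.exists_min_image Finset.univ x hne
  obtain ⟨iM, -, hiM⟩ := Finset.exists_max_image Finset.univ x hne
  have him' : ∀ k, x im ≤ x k := fun k => him k (Finset.mem_univ k)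
  have hiM' : ∀ k, x k ≤ x iM := fun k => hiM k (Finset.mem_univ k)
  -- sum identity
  have hA : ∑ k : Fin n, |x im - x k| + ∑ k : Fin n, |x iM - x k|
      = ∑ k : Fin n, (x iM - x im) := by
    rw [← Finset.sum_add_distrib]
    refine Finset.sum_congr rfl fun k _ => ?_
    rw [abs_sub_comm (x im), abs_of_nonneg (by linarith [him' k]),
      abs_of_nonneg (by linarith [hiM' k])]
    ring
  have hB : ∑ k : Fin n, (x iM - x im)
      ≤ ∑ k : Fin n, |x im - y k| + ∑ k : Fin n, |x iM - y k| := by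
    rw [← Finset.sum_add_distrib]
    refine Finset.sum_le_sum fun k _ => ?_
    have h1 := abs_sub_abs_le_abs_sub (x iM - y k) (x im - y k)
    have h2 := abs_sub (x iM - y k) (x im - y k)
    have := abs_nonneg (x iM - y k)
    have := abs_nonneg (x im - y k)
    calc x iM - x im ≤ |x iM - x im| := le_abs_self _
      _ = |(x iM - y k) - (x im - y k)| := by ring_nf
      _ ≤ |x iM - y k| + |x im - y k| := abs_sub _ _
      _ = |x im - y k| + |x iM - y k| := by ring
  by_cases h : ∑ k : Fin n, |x im - x k| ≤ ∑ k : Fin n, |x im - y k|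
  · exact ⟨im, Or.inl him', h⟩
  · exact ⟨iM, Or.inr hiM', by linarith⟩
end

section
/- Let x_1,…,x_n be pairwise distinct points on the circle such that no x_k is antipodal to any x_l, and let y_1,…,y_n be arbitrary points on the circle. Suppose {i,j} is a nearly antipodal pair, and suppose that ∑_{k=1}^n dist(x_i,x_k) + ∑_{k=1}^n dist(x_j,x_k) > ∑_{k=1}^n dist(x_i,y_k) + ∑_{k=1}^n dist(x_j,y_k). Then the number of indices k with y_k ∈ crit(x_i,x_j) is strictly greater than the number of indices k with x_k ∈ crit(x_i,x_j). -/
/-- The antipodal point of `x` on the circle `ℝ/ℤ` of circumference 1. -/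
noncomputable def antipode (x : AddCircle (1 : ℝ)) : AddCircle (1 : ℝ) :=
  x + ((1 / 2 : ℝ) : AddCircle (1 : ℝ))

/-- The closed short arc between `a` and `b` (for `a ≠ b` with `dist a b < 1/2`):
points `z` lying on a geodesic between `a` and `b`. -/
def closedArc (a b : AddCircle (1 : ℝ)) : Set (AddCircle (1 : ℝ)) :=
  {z | dist a z + dist z b = dist a b}

/-- The open short arc between `a` and `b`: the closed short arc minus its endpoints. -/
def openArc (a b : AddCircle (1 : ℝ)) : Set (AddCircle (1 : ℝ)) :=
  closedArc a b \ {a, b}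

/-- The pair `{i, j}` is nearly antipodal for the profile `x`: `i ≠ j`, no point of
the profile lies in the open short arc between `x i` and the antipode of `x j`, and
none lies in the open short arc between `x j` and the antipode of `x i`. -/
def NearlyAntipodal {n : ℕ} (x : Fin n → AddCircle (1 : ℝ)) (i j : Fin n) : Prop :=
  i ≠ j ∧ (∀ k, x k ∉ openArc (x i) (antipode (x j))) ∧
    (∀ k, x k ∉ openArc (x j) (antipode (x i)))

/-- The critical arc of the pair `(a, b)`: the complement of the closed short arc
between the antipodes of `a` and `b`. -/
def crit (a b : AddCircle (1 : ℝ)) : Set (AddCircle (1 : ℝ)) :=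
  (closedArc (antipode a) (antipode b))ᶜ

section Aux

local notation "S1" => AddCircle (1 : ℝ)

lemma coe_int_zero' (m : ℤ) : ((m : ℝ) : S1) = 0 := by
  rw [QuotientAddGroup.eq_zero_iff]; exact ⟨m, by simp⟩

lemma exists_rep' (z : S1) : ∃ t : ℝ, |t| ≤ 1/2 ∧ (t : S1) = z ∧ ‖z‖ = |t| := by
  induction z using QuotientAddGroup.induction_on with
  | H t =>
    refine ⟨t - round t, abs_sub_round t, ?_, ?_⟩
    · rw [QuotientAddGroup.mk_sub, coe_int_zero', sub_zero]
    · simpa using UnitAddCircle.norm_eq (x := t)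

lemma exists_rep_Ico' (z : S1) : ∃ t : ℝ, 0 ≤ t ∧ t < 1 ∧ (t : S1) = z := by
  induction z using QuotientAddGroup.induction_on with
  | H t =>
    refine ⟨Int.fract t, Int.fract_nonneg t, Int.fract_lt_one t, ?_⟩
    rw [Int.fract, QuotientAddGroup.mk_sub, coe_int_zero', sub_zero]

lemma norm_coe_of_le' (t : ℝ) (h : |t| ≤ 1/2) : ‖(t : S1)‖ = |t| := by
  rw [AddCircle.norm_coe_eq_abs_iff 1 one_ne_zero]; simpa using h

lemma coe_shift' (t : ℝ) : ((t : ℝ) : S1) = ((t - 1 : ℝ) : S1) := by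
  rw [QuotientAddGroup.mk_sub]
  have h1 : ((1:ℝ) : S1) = 0 := by simpa using coe_int_zero' 1
  rw [h1, sub_zero]

lemma norm_shift' (t : ℝ) (h : 1/2 < t) (h2 : t ≤ 3/2) :
    ‖(t : S1)‖ = t - 1 ∨ ‖(t : S1)‖ = 1 - t := by
  rw [coe_shift', norm_coe_of_le' _ (by rw [abs_le]; constructor <;> linarith)]
  rcases abs_cases (t-1) with ⟨h,_⟩|⟨h,_⟩
  · left; exact h
  · right; rw [h]; ring

/-- Core computation on representatives. -/
lemma key' (β ζ : ℝ) (hβ0 : 0 ≤ β) (hβ : β ≤ 1/2) (hζ0 : 0 ≤ ζ) (hζ : ζ < 1) :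
    (‖(ζ : S1)‖ + ‖((ζ - β : ℝ) : S1)‖ ≤ 1 - β) ∧
    (‖(ζ : S1)‖ + ‖((ζ - β : ℝ) : S1)‖ = β ∨
     ‖(ζ : S1)‖ - ‖((ζ - β : ℝ) : S1)‖ = β ∨
     ‖((ζ - β : ℝ) : S1)‖ - ‖(ζ : S1)‖ = β ∨
     ‖(ζ : S1)‖ + ‖((ζ - β : ℝ) : S1)‖ = 1 - β) := by
  rcases le_or_gt ζ (1/2) with h1 | h1
  · have hu : ‖(ζ : S1)‖ = ζ := by
      rw [norm_coe_of_le' _ (by rw [abs_le]; constructor <;> linarith), abs_of_nonneg hζ0]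
    have hv : ‖((ζ - β : ℝ) : S1)‖ = |ζ - β| := by
      rw [norm_coe_of_le' _ (by rw [abs_le]; constructor <;> linarith)]
    rcases le_or_gt ζ β with h2 | h2
    · rw [hu, hv, abs_of_nonpos (by linarith)]
      exact ⟨by linarith, Or.inl (by ring)⟩
    · rw [hu, hv, abs_of_nonneg (by linarith)]
      exact ⟨by linarith, Or.inr (Or.inl (by ring))⟩
  · have hu : ‖(ζ : S1)‖ = 1 - ζ := by
      rcases norm_shift' ζ h1 (by linarith) with h | h
      · exfalso; have := norm_nonneg ((ζ : S1)); rw [h] at this; linarith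
      · exact h
    rcases le_or_gt ζ (β + 1/2) with h2 | h2
    · have hv : ‖((ζ - β : ℝ) : S1)‖ = ζ - β := by
        rw [norm_coe_of_le' _ (by rw [abs_le]; constructor <;> linarith),
          abs_of_nonneg (by linarith)]
      rw [hu, hv]
      exact ⟨by linarith, Or.inr (Or.inr (Or.inr (by ring)))⟩
    · have hv : ‖((ζ - β : ℝ) : S1)‖ = 1 - ζ + β := by
        rcases norm_shift' (ζ - β) (by linarith) (by linarith) with h | h
        · exfalso; have := norm_nonneg (((ζ - β : ℝ) : S1)); rw [h] at this; linarith
        · rw [h]; ring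
      rw [hu, hv]
      exact ⟨by linarith, Or.inr (Or.inr (Or.inl (by ring)))⟩

lemma four_arcs' (B Z : S1) :
    (‖Z‖ + ‖Z - B‖ ≤ 1 - ‖B‖) ∧ (‖Z‖ + ‖Z - B‖ = ‖B‖ ∨ ‖Z‖ - ‖Z - B‖ = ‖B‖ ∨
      ‖Z - B‖ - ‖Z‖ = ‖B‖ ∨ ‖Z‖ + ‖Z - B‖ = 1 - ‖B‖) := by
  obtain ⟨β, hβ, hBe, hBn⟩ := exists_rep' B
  rcases le_or_gt 0 β with h0 | h0
  · obtain ⟨ζ, hζ0, hζ1, hZe⟩ := exists_rep_Ico' Z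
    have hZB : ((ζ - β : ℝ) : S1) = Z - B := by
      rw [QuotientAddGroup.mk_sub, hZe, hBe]
    have h := key' β ζ h0 (by rw [abs_of_nonneg h0] at hβ; exact hβ) hζ0 hζ1
    rw [hZe, hZB] at h
    rw [hBn, abs_of_nonneg h0]
    exact h
  · obtain ⟨ζ, hζ0, hζ1, hZe⟩ := exists_rep_Ico' (-Z)
    have hZB : ((ζ - -β : ℝ) : S1) = -(Z - B) := by
      rw [QuotientAddGroup.mk_sub, hZe, QuotientAddGroup.mk_neg, hBe]; abel
    have h := key' (-β) ζ (by linarith) (by rw [abs_of_neg h0] at hβ; linarith) hζ0 hζ1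
    rw [hZe, hZB, norm_neg, norm_neg] at h
    rw [hBn, abs_of_neg h0]
    exact h

lemma norm_add_half' (z : S1) : ‖z + ((1/2 : ℝ) : S1)‖ = 1/2 - ‖z‖ := by
  obtain ⟨t, ht, hte, htn⟩ := exists_rep' z
  have hco : z + ((1/2 : ℝ) : S1) = ((t + 1/2 : ℝ) : S1) := by
    rw [QuotientAddGroup.mk_add, hte]
  rw [hco, htn]
  rw [abs_le] at ht
  rcases le_or_gt t 0 with h0 | h0
  · rw [norm_coe_of_le' _ (by rw [abs_le]; constructor <;> linarith),
      abs_of_nonneg (by linarith), abs_of_nonpos h0]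
    ring
  · rcases le_or_gt (t + 1/2) (1/2) with h1 | h1
    · linarith
    · rcases norm_shift' (t + 1/2) h1 (by linarith) with h | h
      · have := norm_nonneg (((t + 1/2 : ℝ)) : S1)
        rw [h, abs_of_pos h0]
        rw [h] at this
        linarith
      · rw [h, abs_of_pos h0]; ring

lemma dist_antipode_left (a z : S1) : dist (antipode a) z = 1/2 - dist a z := by
  rw [dist_eq_norm, dist_eq_norm, antipode]
  have h : a + ((1/2 : ℝ) : S1) - z = (a - z) + ((1/2 : ℝ) : S1) := by abel
  rw [h, norm_add_half']

lemma dist_antipode_antipode (a b : S1) : dist (antipode a) (antipode b) = dist a b := by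
  rw [dist_eq_norm, dist_eq_norm, antipode, antipode]
  congr 1
  abel

lemma antipode_of_dist_half {a b : S1} (h : dist a b = 1/2) : b = antipode a := by
  obtain ⟨t, ht, hte, htn⟩ := exists_rep' (a - b)
  rw [dist_eq_norm, htn] at h
  have hhalf : ((-(1/2) : ℝ) : S1) = ((1/2 : ℝ) : S1) := by
    have h2 : ((1/2 : ℝ) : S1) = ((1/2 - 1 : ℝ) : S1) := coe_shift' _
    rw [h2]; norm_num
  have hab : ((1/2 : ℝ) : S1) = a - b := by
    rcases abs_cases t with ⟨h1, _⟩ | ⟨h1, _⟩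
    · have ht2 : t = 1/2 := by linarith
      rwa [ht2] at hte
    · have ht2 : t = -(1/2) := by linarith
      rw [ht2, hhalf] at hte
      exact hte
  have hneg : -((1/2 : ℝ) : S1) = ((1/2 : ℝ) : S1) := by
    rw [← QuotientAddGroup.mk_neg]; exact hhalf
  unfold antipode
  have hb : b = a - ((1/2 : ℝ) : S1) := by rw [hab]; abel
  rw [hb, sub_eq_add_neg, hneg]

lemma mem_crit_iff' (a b z : S1) :
    z ∈ crit a b ↔ dist a z + dist b z ≠ 1 - dist a b := by
  unfold crit closedArc
  simp only [Set.mem_compl_iff, Set.mem_setOf_eq]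
  rw [dist_antipode_antipode, dist_antipode_left, dist_comm z (antipode b),
    dist_antipode_left, dist_comm b z]
  constructor
  · intro h hc; exact h (by linarith)
  · intro h hc; exact h (by linarith)

end Aux

/-- **Lemma (critical arcs of nearly antipodal pairs).** -/
theorem crit_count_lt_of_gain {n : ℕ} (x y : Fin n → AddCircle (1 : ℝ))
    (hinj : Function.Injective x)
    (hanti : ∀ k l : Fin n, x k ≠ antipode (x l))
    (i j : Fin n) (hij : NearlyAntipodal x i j)
    (hsum : ∑ k : Fin n, dist (x i) (y k) + ∑ k : Fin n, dist (x j) (y k) <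
            ∑ k : Fin n, dist (x i) (x k) + ∑ k : Fin n, dist (x j) (x k)) :
    {k : Fin n | x k ∈ crit (x i) (x j)}.ncard <
      {k : Fin n | y k ∈ crit (x i) (x j)}.ncard := by
  classical
  set a := x i with ha
  set b := x j with hb
  set d := dist a b with hd
  have hd0 : 0 < d := dist_pos.mpr (fun h => hij.1 (hinj h))
  have hdle : d ≤ 1/2 := by
    have := AddCircle.norm_le_half_period (1 : ℝ) one_ne_zero (x := a - b)
    rw [hd, dist_eq_norm]
    simpa using this
  have hd2 : d < 1/2 := by
    rcases lt_or_eq_of_le hdle with h | h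
    · exact h
    · exact absurd (antipode_of_dist_half h) (hanti j i)
  -- distance identities for each z, via four_arcs' on B = a - b, Z = a - z
  have fa : ∀ z : AddCircle (1:ℝ),
      (dist a z + dist b z ≤ 1 - d) ∧ (dist a z + dist b z = d ∨
        dist a z - dist b z = d ∨ dist b z - dist a z = d ∨ dist a z + dist b z = 1 - d) := by
    intro z
    have h := four_arcs' (a - b) (a - z)
    have e1 : (a - z) - (a - b) = b - z := by abel
    rw [e1] at h
    simpa only [← dist_eq_norm, ← hd] using h
  -- dichotomy for profile points
  have dich : ∀ k, (dist a (x k) + dist b (x k) = d ∧ x k ∈ crit a b) ∨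
      (dist a (x k) + dist b (x k) = 1 - d ∧ x k ∉ crit a b) := by
    intro k
    have hcrit_of : dist a (x k) + dist b (x k) = d → x k ∈ crit a b := by
      intro h
      rw [mem_crit_iff' a b (x k)]
      rw [h, ← hd]
      intro hc
      linarith
    rcases (fa (x k)).2 with h | h | h | h
    · exact Or.inl ⟨h, hcrit_of h⟩
    · -- x k ∈ closedArc b (antipode a); conclude x k = b
      have hmem : x k ∈ closedArc b (antipode a) := by
        unfold closedArc
        rw [Set.mem_setOf_eq, dist_comm (x k) (antipode a), dist_antipode_left,
          dist_comm b (antipode a), dist_antipode_left]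
        have hd' : d = dist a b := hd
        linarith
      have hxk : x k = b := by
        by_contra hne
        have h2 := hij.2.2 k
        rw [openArc] at h2
        have hm : x k ∈ ({(x j), antipode (x i)} : Set (AddCircle (1:ℝ))) := by
          by_contra hno
          exact h2 ⟨hmem, hno⟩
        rcases hm with h3 | h3
        · exact hne h3
        · exact (hanti k i) h3
      have h1 : dist b (x k) = 0 := by rw [hxk, dist_self]
      have h2 : dist a (x k) = d := by rw [hxk]
      have hf : dist a (x k) + dist b (x k) = d := by rw [h1, h2]; ring
      exact Or.inl ⟨hf, hcrit_of hf⟩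
    · -- x k ∈ closedArc a (antipode b); conclude x k = a
      have hmem : x k ∈ closedArc a (antipode b) := by
        unfold closedArc
        rw [Set.mem_setOf_eq, dist_comm (x k) (antipode b), dist_antipode_left,
          dist_comm a (antipode b), dist_antipode_left, dist_comm b a]
        have hd' : d = dist a b := hd
        linarith
      have hxk : x k = a := by
        by_contra hne
        have h2 := hij.2.1 k
        rw [openArc] at h2
        have hm : x k ∈ ({(x i), antipode (x j)} : Set (AddCircle (1:ℝ))) := by
          by_contra hno
          exact h2 ⟨hmem, hno⟩
        rcases hm with h3 | h3
        · exact hne h3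
        · exact (hanti k j) h3
      have h1 : dist a (x k) = 0 := by rw [hxk, dist_self]
      have h2 : dist b (x k) = d := by rw [hxk, dist_comm]
      have hf : dist a (x k) + dist b (x k) = d := by rw [h1, h2]; ring
      exact Or.inl ⟨hf, hcrit_of hf⟩
    · refine Or.inr ⟨h, ?_⟩
      rw [mem_crit_iff' a b (x k), ← hd]
      intro hc
      exact hc h
  -- crit membership characterization for all z
  have ycrit : ∀ z, z ∉ crit a b → dist a z + dist b z = 1 - d := by
    intro z hz
    rw [mem_crit_iff' a b z, ← hd] at hz
    push_neg at hz
    exact hz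
  have ylow : ∀ z, d ≤ dist a z + dist b z := by
    intro z
    calc d = dist a b := hd
    _ ≤ dist a z + dist z b := dist_triangle a z b
    _ = dist a z + dist b z := by rw [dist_comm z b]
  -- counting
  set P : Fin n → Prop := fun k => x k ∈ crit a b with hP
  set Q : Fin n → Prop := fun k => y k ∈ crit a b with hQ
  set Sx := Finset.univ.filter P with hSx
  set Sy := Finset.univ.filter Q with hSy
  set Sx' := Finset.univ.filter (fun k => ¬ P k) with hSx'
  set Sy' := Finset.univ.filter (fun k => ¬ Q k) with hSy'
  have hcardx : Sx.card + Sx'.card = n := by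
    rw [hSx, hSx']
    rw [Finset.card_filter_add_card_filter_not]
    simp
  have hcardy : Sy.card + Sy'.card = n := by
    rw [hSy, hSy']
    rw [Finset.card_filter_add_card_filter_not]
    simp
  have hsum' : ∑ k : Fin n, (dist a (y k) + dist b (y k)) <
      ∑ k : Fin n, (dist a (x k) + dist b (x k)) := by
    rw [Finset.sum_add_distrib, Finset.sum_add_distrib]
    exact hsum
  have hxval : ∑ k : Fin n, (dist a (x k) + dist b (x k)) =
      Sx.card * d + Sx'.card * (1 - d) := by
    rw [← Finset.sum_filter_add_sum_filter_not Finset.univ P]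
    congr 1
    · rw [Finset.sum_congr rfl (fun k hk => ?_), Finset.sum_const, nsmul_eq_mul]
      rcases dich k with ⟨h1, _⟩ | ⟨_, h2⟩
      · exact h1
      · exact absurd (Finset.mem_filter.mp hk).2 h2
    · rw [Finset.sum_congr rfl (fun k hk => ?_), Finset.sum_const, nsmul_eq_mul]
      rcases dich k with ⟨_, h2⟩ | ⟨h1, _⟩
      · exact absurd h2 (Finset.mem_filter.mp hk).2
      · exact h1
  have hyval : (Sy.card : ℝ) * d + Sy'.card * (1 - d) ≤
      ∑ k : Fin n, (dist a (y k) + dist b (y k)) := by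
    have h1 : (Sy.card : ℝ) * d ≤ ∑ k ∈ Sy, (dist a (y k) + dist b (y k)) := by
      have := Finset.card_nsmul_le_sum Sy (fun k => dist a (y k) + dist b (y k)) d
        (fun k _ => ylow (y k))
      rwa [nsmul_eq_mul] at this
    have h2 : ∑ k ∈ Sy', (dist a (y k) + dist b (y k)) = (Sy'.card : ℝ) * (1 - d) := by
      rw [Finset.sum_congr rfl (fun k hk => ycrit (y k) ?_), Finset.sum_const, nsmul_eq_mul]
      have := (Finset.mem_filter.mp hk).2
      simpa [hQ] using this
    have e := Finset.sum_filter_add_sum_filter_not Finset.univ Q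
      (fun k => dist a (y k) + dist b (y k))
    have h3 := add_le_add h1 (le_of_eq h2.symm)
    exact le_trans h3 (le_of_eq e)
  -- identify ncards with filter cards
  have hSxn : {k : Fin n | x k ∈ crit a b}.ncard = Sx.card := by
    have he : {k : Fin n | x k ∈ crit a b} = ↑Sx := by
      ext k; simp [hSx, hP]
    rw [he, Set.ncard_coe_finset]
  have hSyn : {k : Fin n | y k ∈ crit a b}.ncard = Sy.card := by
    have he : {k : Fin n | y k ∈ crit a b} = ↑Sy := by
      ext k; simp [hSy, hQ]
    rw [he, Set.ncard_coe_finset]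
  rw [hSxn, hSyn]
  by_contra hle
  push_neg at hle
  have hr : (Sy.card : ℝ) ≤ Sx.card := by exact_mod_cast hle
  have hx' : (Sx'.card : ℝ) = n - Sx.card := by
    have : (Sx.card : ℝ) + Sx'.card = n := by exact_mod_cast congrArg (Nat.cast : ℕ → ℝ) hcardx
    linarith
  have hy' : (Sy'.card : ℝ) = n - Sy.card := by
    have : (Sy.card : ℝ) + Sy'.card = n := by exact_mod_cast congrArg (Nat.cast : ℕ → ℝ) hcardy
    linarith
  rw [hxval] at hsum'
  nlinarith [mul_nonneg (sub_nonneg.mpr hr) (by linarith : (0:ℝ) ≤ 1 - 2*d), hyval, hsum',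
    hx', hy']
end

section
/- Let n ≥ 2 and let x_1,…,x_n be pairwise distinct points on the circle such that no x_k is antipodal to any x_l. Let A be the set of nearly antipodal (unordered) pairs. Then |A| is odd, say |A| = 2s+1, and for every index i the number of pairs {j,k} ∈ A whose critical arc crit(x_j,x_k) contains x_i is exactly s+1. (Consequently ∑_{{j,k}∈A} |{l : x_l ∈ crit(x_j,x_k)}| = (s+1)·n.) -/
set_option linter.unusedSectionVars false
set_option maxHeartbeats 1000000

open Set

local notation "𝕊" => AddCircle (1 : ℝ)

lemma norm_coe_of_abs_le {r : ℝ} (h : |r| ≤ 1/2) : ‖(r : 𝕊)‖ = |r| := by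
  rw [AddCircle.norm_coe_eq_abs_iff (p := (1:ℝ)) (by norm_num)]
  norm_num [h]

lemma coe_eq_coe_Ico {u w : ℝ} (hu : u ∈ Ico (0:ℝ) 1) (hw : w ∈ Ico (0:ℝ) 1) :
    (u : 𝕊) = (w : 𝕊) ↔ u = w := by
  have hu' : u ∈ Ico (0:ℝ) (0 + 1) := by simpa using hu
  have hw' : w ∈ Ico (0:ℝ) (0 + 1) := by simpa using hw
  exact AddCircle.coe_eq_coe_iff_of_mem_Ico hu' hw'

lemma norm_coe_Ico {t : ℝ} (ht : t ∈ Ico (0:ℝ) 1) :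
    ‖(t : 𝕊)‖ = if t ≤ 1/2 then t else 1 - t := by
  obtain ⟨h0, h1⟩ := ht
  split_ifs with h
  · rw [norm_coe_of_abs_le (by rw [abs_of_nonneg h0]; exact h), abs_of_nonneg h0]
  · have : ((t : ℝ) : 𝕊) = ((t - 1 : ℝ) : 𝕊) := by
      rw [← AddCircle.coe_add_period 1 (t-1)]; norm_num
    rw [this, norm_coe_of_abs_le (by rw [abs_of_nonpos (by linarith)]; linarith),
      abs_of_nonpos (by linarith)]
    ring

lemma closedArc_comm (a b : 𝕊) : closedArc a b = closedArc b a := by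
  ext z; simp only [closedArc, mem_setOf_eq, dist_comm a z, dist_comm z b, dist_comm a b]
  constructor <;> intro h <;> linarith

lemma openArc_comm (a b : 𝕊) : openArc a b = openArc b a := by
  simp only [openArc, closedArc_comm a b]
  congr 1
  ext z; simp only [mem_insert_iff, mem_singleton_iff]; tauto

lemma mem_closedArc_iff_right {a : 𝕊} {δ : ℝ} (h0 : 0 ≤ δ) (h : δ < 1/2) {z : 𝕊} :
    z ∈ closedArc a (a + (δ : 𝕊)) ↔ ∃ t, 0 ≤ t ∧ t ≤ δ ∧ z = a + (t : 𝕊) := by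
  have hd : dist a (a + (δ : 𝕊)) = δ := by
    rw [dist_eq_norm]
    have : a - (a + (δ : 𝕊)) = ((-δ : ℝ) : 𝕊) := by rw [AddCircle.coe_neg]; abel
    rw [this, norm_coe_of_abs_le (by rw [abs_neg, abs_of_nonneg h0]; linarith),
      abs_neg, abs_of_nonneg h0]
  constructor
  · intro hz
    simp only [closedArc, mem_setOf_eq] at hz
    obtain ⟨t, ht, hte⟩ := AddCircle.eq_coe_Ico (z - a)
    obtain ⟨ht0', ht1'⟩ := ht
    have hz1 : dist a z = ‖(t : 𝕊)‖ := by
      rw [dist_eq_norm, ← norm_neg, hte]; congr 1; abel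
    have hz2 : dist z (a + (δ : 𝕊)) = ‖((t - δ : ℝ) : 𝕊)‖ := by
      rw [dist_eq_norm]
      congr 1
      have : z = a + ((t:ℝ) : 𝕊) := by rw [hte]; abel
      rw [this, AddCircle.coe_sub]; abel
    rw [hd, hz1, hz2] at hz
    rw [norm_coe_Ico ⟨ht0', ht1'⟩] at hz
    refine ⟨t, ht0', ?_, by rw [hte]; abel⟩
    by_contra hcon
    push_neg at hcon
    rcases le_or_gt t (1/2) with h12 | h12
    · rw [if_pos h12] at hz
      have habs : |t - δ| ≤ 1/2 := by rw [abs_of_nonneg (by linarith)]; linarith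
      rw [norm_coe_of_abs_le habs, abs_of_nonneg (by linarith)] at hz
      linarith
    · rw [if_neg (not_le.mpr h12)] at hz
      rcases le_or_gt (t - δ) (1/2) with h2 | h2
      · rw [norm_coe_of_abs_le (by rw [abs_of_nonneg (by linarith)]; linarith),
          abs_of_nonneg (by linarith)] at hz
        linarith
      · have : ((t - δ : ℝ) : 𝕊) = ((t - δ - 1 : ℝ) : 𝕊) := by
          rw [← AddCircle.coe_add_period 1 (t - δ - 1)]; norm_num
        rw [this, norm_coe_of_abs_le (by rw [abs_of_nonpos (by linarith)]; linarith),
          abs_of_nonpos (by linarith)] at hz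
        linarith
  · rintro ⟨t, ht0, htd, rfl⟩
    simp only [closedArc, mem_setOf_eq, hd]
    have h1 : dist a (a + (t : 𝕊)) = t := by
      rw [dist_eq_norm]
      have : a - (a + (t : 𝕊)) = ((-t : ℝ) : 𝕊) := by rw [AddCircle.coe_neg]; abel
      rw [this, norm_coe_of_abs_le (by rw [abs_neg, abs_of_nonneg ht0]; linarith), abs_neg,
        abs_of_nonneg ht0]
    have h2 : dist (a + (t : 𝕊)) (a + (δ : 𝕊)) = δ - t := by
      rw [dist_eq_norm]
      have : (a + (t : 𝕊)) - (a + (δ : 𝕊)) = ((t - δ : ℝ) : 𝕊) := by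
        rw [AddCircle.coe_sub]; abel
      rw [this, norm_coe_of_abs_le (by rw [abs_of_nonpos (by linarith)]; linarith),
        abs_of_nonpos (by linarith)]
      ring
    rw [h1, h2]; ring

lemma mem_closedArc_translate {c a b z : 𝕊} :
    c + z ∈ closedArc (c + a) (c + b) ↔ z ∈ closedArc a b := by
  simp [closedArc, dist_add_left]

/-- Characterization of closed-arc membership for representatives in `[0,1)`, case `p < q`. -/
lemma closed_real_aux {p q r : ℝ} (hp : p ∈ Ico (0:ℝ) 1) (hq : q ∈ Ico (0:ℝ) 1)
    (hr : r ∈ Ico (0:ℝ) 1) (hpq : p < q) (hhalf : q - p ≠ 1/2) :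
    ((r : ℝ) : 𝕊) ∈ closedArc ((p : ℝ) : 𝕊) ((q : ℝ) : 𝕊) ↔
      ((q - p < 1/2 ∧ p ≤ r ∧ r ≤ q) ∨ (1/2 < q - p ∧ (r ≤ p ∨ q ≤ r))) := by
  obtain ⟨hp0, hp1⟩ := hp; obtain ⟨hq0, hq1⟩ := hq; obtain ⟨hr0, hr1⟩ := hr
  rcases lt_or_gt_of_ne hhalf with hlt | hgt
  · -- short arc is [p, q]
    have hq' : ((q : ℝ) : 𝕊) = ((p : ℝ) : 𝕊) + ((q - p : ℝ) : 𝕊) := by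
      rw [← AddCircle.coe_add]; norm_num
    rw [hq', mem_closedArc_iff_right (by linarith) hlt]
    constructor
    · rintro ⟨t, ht0, htd, hte⟩
      rw [← AddCircle.coe_add] at hte
      have := (coe_eq_coe_Ico ⟨hr0, hr1⟩ ⟨by linarith, by linarith⟩).mp hte
      exact Or.inl ⟨hlt, by linarith, by linarith⟩
    · rintro (⟨-, h1, h2⟩ | ⟨habs, -⟩)
      · exact ⟨r - p, by linarith, by linarith, by rw [← AddCircle.coe_add]; norm_num⟩
      · linarith
  · -- short arc is [q, 1] ∪ [0, p]
    have hp' : ((p : ℝ) : 𝕊) = ((q : ℝ) : 𝕊) + ((1 + p - q : ℝ) : 𝕊) := by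
      rw [← AddCircle.coe_add, ← AddCircle.coe_add_period 1 p]; norm_num
    rw [closedArc_comm, hp', mem_closedArc_iff_right (by linarith) (by linarith)]
    constructor
    · rintro ⟨t, ht0, htd, hte⟩
      rw [← AddCircle.coe_add] at hte
      rcases lt_or_ge (q + t) 1 with hc | hc
      · have := (coe_eq_coe_Ico ⟨hr0, hr1⟩ ⟨by linarith, hc⟩).mp hte
        exact Or.inr ⟨hgt, Or.inr (by linarith)⟩
      · have hte2 : ((r : ℝ) : 𝕊) = ((q + t - 1 : ℝ) : 𝕊) := by
          rw [hte, ← AddCircle.coe_add_period 1 (q + t - 1)]; norm_num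
        have := (coe_eq_coe_Ico ⟨hr0, hr1⟩ ⟨by linarith, by linarith⟩).mp hte2
        exact Or.inr ⟨hgt, Or.inl (by linarith)⟩
    · rintro (⟨habs, -⟩ | ⟨-, hr2 | hr2⟩)
      · linarith
      · exact ⟨r + 1 - q, by linarith, by linarith,
          by rw [← AddCircle.coe_add, ← AddCircle.coe_add_period 1 r]; norm_num⟩
      · exact ⟨r - q, by linarith, by linarith, by rw [← AddCircle.coe_add]; norm_num⟩

lemma mem_closedArc_real {c : 𝕊} {p q r : ℝ} (hp : p ∈ Ico (0:ℝ) 1) (hq : q ∈ Ico (0:ℝ) 1)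
    (hr : r ∈ Ico (0:ℝ) 1) (hpq : p ≠ q) (hhalf : |p - q| ≠ 1/2) :
    c + ((r : ℝ) : 𝕊) ∈ closedArc (c + ((p : ℝ) : 𝕊)) (c + ((q : ℝ) : 𝕊)) ↔
      ((|p - q| < 1/2 ∧ min p q ≤ r ∧ r ≤ max p q) ∨
        (1/2 < |p - q| ∧ (r ≤ min p q ∨ max p q ≤ r))) := by
  rw [mem_closedArc_translate]
  rcases lt_or_gt_of_ne hpq with h | h
  · rw [closed_real_aux hp hq hr h
        (by intro hc; apply hhalf; rw [abs_of_neg (by linarith)]; linarith)]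
    rw [abs_of_neg (by linarith : p - q < 0), min_eq_left h.le, max_eq_right h.le,
      (by ring : -(p - q) = q - p)]
  · rw [closedArc_comm, closed_real_aux hq hp hr h
        (by intro hc; apply hhalf; rw [abs_of_pos (by linarith)]; linarith)]
    rw [abs_of_pos (by linarith : (0:ℝ) < p - q), min_eq_right h.le, max_eq_left h.le]

lemma mem_openArc_real {c : 𝕊} {p q r : ℝ} (hp : p ∈ Ico (0:ℝ) 1) (hq : q ∈ Ico (0:ℝ) 1)
    (hr : r ∈ Ico (0:ℝ) 1) (hpq : p ≠ q) (hhalf : |p - q| ≠ 1/2) :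
    c + ((r : ℝ) : 𝕊) ∈ openArc (c + ((p : ℝ) : 𝕊)) (c + ((q : ℝ) : 𝕊)) ↔
      ((|p - q| < 1/2 ∧ min p q < r ∧ r < max p q) ∨
        (1/2 < |p - q| ∧ (r < min p q ∨ max p q < r))) := by
  have hrp : c + ((r : ℝ) : 𝕊) = c + ((p : ℝ) : 𝕊) ↔ r = p := by
    rw [add_right_inj]; exact coe_eq_coe_Ico hr hp
  have hrq : c + ((r : ℝ) : 𝕊) = c + ((q : ℝ) : 𝕊) ↔ r = q := by
    rw [add_right_inj]; exact coe_eq_coe_Ico hr hq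
  simp only [openArc, mem_diff, mem_insert_iff, mem_singleton_iff,
    mem_closedArc_real hp hq hr hpq hhalf, hrp, hrq]
  constructor
  · rintro ⟨hcl, hne⟩
    push_neg at hne
    obtain ⟨hne1, hne2⟩ := hne
    have hminne : min p q ≠ r := by
      rcases min_choice p q with hm | hm <;> rw [hm] <;> [exact fun h => hne1 h.symm;
        exact fun h => hne2 h.symm]
    have hmaxne : r ≠ max p q := by
      rcases max_choice p q with hm | hm <;> rw [hm] <;> assumption
    rcases hcl with ⟨h1, h2, h3⟩ | ⟨h1, h2⟩
    · exact Or.inl ⟨h1, lt_of_le_of_ne h2 hminne, lt_of_le_of_ne h3 hmaxne⟩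
    · rcases h2 with h2 | h2
      · exact Or.inr ⟨h1, Or.inl (lt_of_le_of_ne h2 (Ne.symm hminne))⟩
      · exact Or.inr ⟨h1, Or.inr (lt_of_le_of_ne h2 (Ne.symm hmaxne))⟩
  · intro hcl
    have hne1 : ¬(r = p ∨ r = q) := by
      rintro (rfl | rfl)
      · rcases hcl with ⟨h1, h2, h3⟩ | ⟨h1, h2 | h2⟩
        · rcases le_total r q with hle | hle
          · exact absurd h2 (by rw [min_eq_left hle]; exact lt_irrefl r)
          · exact absurd h3 (by rw [max_eq_left hle]; exact lt_irrefl r)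
        · exact absurd h2 (not_lt.mpr (min_le_left r q))
        · exact absurd h2 (not_lt.mpr (le_max_left r q))
      · rcases hcl with ⟨h1, h2, h3⟩ | ⟨h1, h2 | h2⟩
        · rcases le_total r p with hle | hle
          · exact absurd h2 (by rw [min_eq_right hle]; exact lt_irrefl r)
          · exact absurd h3 (by rw [max_eq_right hle]; exact lt_irrefl r)
        · exact absurd h2 (not_lt.mpr (min_le_right p r))
        · exact absurd h2 (not_lt.mpr (le_max_right p r))
    refine ⟨?_, hne1⟩
    rcases hcl with ⟨h1, h2, h3⟩ | ⟨h1, h2 | h2⟩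
    · exact Or.inl ⟨h1, h2.le, h3.le⟩
    · exact Or.inr ⟨h1, Or.inl h2.le⟩
    · exact Or.inr ⟨h1, Or.inr h2.le⟩


lemma antipode_antipode (z : 𝕊) : antipode (antipode z) = z := by
  unfold antipode
  rw [add_assoc, ← AddCircle.coe_add]
  norm_num

lemma antipode_inj {u z : 𝕊} (h : antipode u = antipode z) : u = z := by
  unfold antipode at h
  exact add_right_cancel h

lemma mem_openArc_translate {c a b z : 𝕊} :
    c + z ∈ openArc (c + a) (c + b) ↔ z ∈ openArc a b := by
  simp only [openArc, mem_diff, mem_closedArc_translate, mem_insert_iff, mem_singleton_iff,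
    add_right_inj]

lemma antipode_mem_openArc_iff {a b z : 𝕊} :
    antipode z ∈ openArc (antipode a) (antipode b) ↔ z ∈ openArc a b := by
  unfold antipode
  rw [add_comm z, add_comm a, add_comm b]
  exact mem_openArc_translate

lemma arc2_swap {a b z : 𝕊} :
    z ∈ openArc b (antipode a) ↔ antipode z ∈ openArc a (antipode b) := by
  rw [← antipode_mem_openArc_iff (a := b) (b := antipode a), antipode_antipode, openArc_comm]


def OpenCond (p q r : ℝ) : Prop :=
  (|p - q| < 1/2 ∧ min p q < r ∧ r < max p q) ∨ (1/2 < |p - q| ∧ (r < min p q ∨ max p q < r))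

def ClosedCond0 (p q : ℝ) : Prop :=
  (|p - q| < 1/2 ∧ min p q ≤ 0 ∧ 0 ≤ max p q) ∨ (1/2 < |p - q| ∧ (0 ≤ min p q ∨ max p q ≤ 0))

noncomputable def g2 {n : ℕ} (v : Fin n → ℝ) (w : Fin n → Bool) (m : Fin n) (b : Bool) : ℝ :=
  if w m = b then v m else v m + 1/2

def NAR {n : ℕ} (v : Fin n → ℝ) (w : Fin n → Bool) (j k : Fin n) : Prop :=
  j ≠ k ∧ ∀ m b, ¬ OpenCond (g2 v w j true) (g2 v w k false) (g2 v w m b)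

def CRR {n : ℕ} (v : Fin n → ℝ) (w : Fin n → Bool) (j k : Fin n) : Prop :=
  ¬ ClosedCond0 (g2 v w j false) (g2 v w k false)

section core
variable {n : ℕ} {v : Fin n → ℝ} {w : Fin n → Bool} {i₀ : Fin n}
  (hvinj : Function.Injective v) (h0 : ∀ m, 0 ≤ v m) (h2 : ∀ m, v m < 1/2)
  (hv0 : v i₀ = 0) (hw0 : w i₀ = true)

include hvinj h0 h2 hv0 hw0

omit hvinj hv0 hw0 in
lemma habs (j k : Fin n) : |v j - v k| < 1/2 := by
  rw [abs_sub_lt_iff]; constructor <;> [linarith [h0 k, h2 j]; linarith [h0 j, h2 k]]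

omit h0 h2 hv0 hw0 in
lemma vne {j k : Fin n} (hjk : j ≠ k) : v j ≠ v k := fun h => hjk (hvinj h)

omit h2 hw0 in
lemma vpos {m : Fin n} (hm : m ≠ i₀) : 0 < v m :=
  lt_of_le_of_ne (h0 m) (fun h => hm (hvinj (by rw [← h, hv0])))

omit hvinj h0 h2 hv0 in
lemma wneq_ne {m : Fin n} (hm : w m = false) : m ≠ i₀ := by
  intro h; rw [h, hw0] at hm; simp at hm

/-- mixed-color characterization: nearly antipodal iff `v`-adjacent -/
lemma NAR_mixed {j k : Fin n} (hjk : j ≠ k) (hw : w j ≠ w k) :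
    NAR v w j k ↔ ∀ m, ¬(min (v j) (v k) < v m ∧ v m < max (v j) (v k)) := by
  have hmaxlt : max (v j) (v k) < 1/2 := max_lt (h2 j) (h2 k)
  have hminnn : 0 ≤ min (v j) (v k) := le_min (h0 j) (h0 k)
  cases hwj : w j with
  | false =>
    have hwk : w k = true := by
      cases hk : w k
      · exact absurd (hwj.trans hk.symm) hw
      · rfl
    have hP : g2 v w j true = v j + 1/2 := by simp [g2, hwj]
    have hQ : g2 v w k false = v k + 1/2 := by simp [g2, hwk]
    have habs' : |g2 v w j true - g2 v w k false| = |v j - v k| := by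
      rw [hP, hQ]; congr 1; ring
    have hmin : min (g2 v w j true) (g2 v w k false) = min (v j) (v k) + 1/2 := by
      rw [hP, hQ, min_add_add_right]
    have hmax : max (g2 v w j true) (g2 v w k false) = max (v j) (v k) + 1/2 := by
      rw [hP, hQ, max_add_add_right]
    constructor
    · rintro ⟨-, H⟩ m ⟨hm1, hm2⟩
      refine H m (!(w m)) ?_
      have hg : g2 v w m (!(w m)) = v m + 1/2 := by
        unfold g2; rw [if_neg]; simp
      exact Or.inl ⟨by rw [habs']; exact habs h0 h2 j k,
        by rw [hg, hmin]; linarith, by rw [hg, hmax]; linarith⟩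
    · intro H
      refine ⟨hjk, fun m b hoc => ?_⟩
      rcases hoc with ⟨-, hm1, hm2⟩ | ⟨hgt, -⟩
      · rcases (by unfold g2; split <;> [left; right] <;> rfl :
            g2 v w m b = v m ∨ g2 v w m b = v m + 1/2) with hg | hg
        · rw [hg, hmin] at hm1; linarith [h2 m]
        · exact H m ⟨by rw [hg, hmin] at hm1; linarith, by rw [hg, hmax] at hm2; linarith⟩
      · rw [habs'] at hgt; linarith [habs h0 h2 j k]
  | true =>
    have hwk : w k = false := by
      cases hk : w k
      · rfl
      · exact absurd (hwj.trans hk.symm) hw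
    have hP : g2 v w j true = v j := by simp [g2, hwj]
    have hQ : g2 v w k false = v k := by simp [g2, hwk]
    constructor
    · rintro ⟨-, H⟩ m ⟨hm1, hm2⟩
      refine H m (w m) ?_
      have hg : g2 v w m (w m) = v m := if_pos rfl
      exact Or.inl ⟨by rw [hP, hQ]; exact habs h0 h2 j k,
        by rw [hg, hP, hQ]; exact hm1, by rw [hg, hP, hQ]; exact hm2⟩
    · intro H
      refine ⟨hjk, fun m b hoc => ?_⟩
      rcases hoc with ⟨-, hm1, hm2⟩ | ⟨hgt, -⟩
      · rcases (by unfold g2; split <;> [left; right] <;> rfl :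
            g2 v w m b = v m ∨ g2 v w m b = v m + 1/2) with hg | hg
        · exact H m ⟨by rw [hg, hP, hQ] at hm1; exact hm1, by rw [hg, hP, hQ] at hm2; exact hm2⟩
        · rw [hg, hP, hQ] at hm2; linarith [h0 m]
      · rw [hP, hQ] at hgt; linarith [habs h0 h2 j k]

/-- both-white characterization -/
lemma NAR_ww {j k : Fin n} (hjk : j ≠ k) (hwj : w j = true) (hwk : w k = true) :
    NAR v w j k ↔ ((j = i₀ ∧ ∀ m, v m ≤ v k) ∨ (k = i₀ ∧ ∀ m, v m ≤ v j)) := by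
  have hP : g2 v w j true = v j := by simp [g2, hwj]
  have hQ : g2 v w k false = v k + 1/2 := by simp [g2, hwk]
  have hvjk : v j ≠ v k := vne hvinj hjk
  have hmin : min (g2 v w j true) (g2 v w k false) = v j := by
    rw [hP, hQ]; exact min_eq_left (by linarith [h2 j, h0 k])
  have hmax : max (g2 v w j true) (g2 v w k false) = v k + 1/2 := by
    rw [hP, hQ]; exact max_eq_right (by linarith [h2 j, h0 k])
  have habs' : |g2 v w j true - g2 v w k false| = v k + 1/2 - v j := by
    rw [hP, hQ, abs_of_nonpos (by linarith [h2 j, h0 k])]; ring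
  constructor
  · rintro ⟨-, H⟩
    rcases lt_or_gt_of_ne hvjk with hlt | hgt
    · left
      constructor
      · by_contra hne
        have hj0 : 0 < v j := vpos hvinj h0 hv0 hne
        refine H i₀ true (Or.inr ⟨by rw [habs']; linarith, Or.inl ?_⟩)
        rw [hmin]
        simp [g2, hw0, hv0, hj0]
      · intro m
        by_contra hm
        push_neg at hm
        refine H m (!(w m)) (Or.inr ⟨by rw [habs']; linarith, Or.inr ?_⟩)
        rw [hmax]
        have : g2 v w m (!(w m)) = v m + 1/2 := by unfold g2; rw [if_neg]; simp
        rw [this]; linarith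
    · right
      constructor
      · have hk0 : v k ≤ 0 := by
          by_contra hk0
          push_neg at hk0
          refine H i₀ false (Or.inl ⟨by rw [habs']; linarith, ?_, ?_⟩)
          · rw [hmin]
            have : g2 v w i₀ false = v i₀ + 1/2 := by simp [g2, hw0]
            rw [this, hv0]; linarith [h2 j]
          · rw [hmax]
            have : g2 v w i₀ false = v i₀ + 1/2 := by simp [g2, hw0]
            rw [this, hv0]; linarith
        have : v k = 0 := le_antisymm hk0 (h0 k)
        exact hvinj (by rw [this, hv0])
      · intro m
        by_contra hm
        push_neg at hm
        refine H m (w m) (Or.inl ⟨by rw [habs']; linarith, ?_, ?_⟩)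
        · rw [hmin]
          have : g2 v w m (w m) = v m := if_pos rfl
          rw [this]; linarith
        · rw [hmax]
          have : g2 v w m (w m) = v m := if_pos rfl
          rw [this]; linarith [h2 m, h0 k]
  · rintro (⟨rfl, hmaxk⟩ | ⟨rfl, hmaxj⟩)
    · have hk0 : 0 < v k := vpos hvinj h0 hv0 (fun h => hjk h.symm)
      refine ⟨hjk, fun m b hoc => ?_⟩
      rcases hoc with ⟨h1, -⟩ | ⟨-, hr1 | hr2⟩
      · rw [habs', hv0] at h1; linarith
      · rw [hmin, hv0] at hr1
        rcases (by unfold g2; split <;> [left; right] <;> rfl :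
            g2 v w m b = v m ∨ g2 v w m b = v m + 1/2) with hg | hg <;> rw [hg] at hr1 <;>
          linarith [h0 m]
      · rw [hmax] at hr2
        rcases (by unfold g2; split <;> [left; right] <;> rfl :
            g2 v w m b = v m ∨ g2 v w m b = v m + 1/2) with hg | hg <;> rw [hg] at hr2 <;>
          [linarith [h2 m, h0 k]; linarith [hmaxk m]]
    · have hj0 : 0 < v j := vpos hvinj h0 hv0 hjk
      refine ⟨hjk, fun m b hoc => ?_⟩
      rcases hoc with ⟨-, hr1, hr2⟩ | ⟨h1, -⟩
      · rw [hmin] at hr1; rw [hmax, hv0] at hr2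
        rcases (by unfold g2; split <;> [left; right] <;> rfl :
            g2 v w m b = v m ∨ g2 v w m b = v m + 1/2) with hg | hg
        · rw [hg] at hr1; linarith [hmaxj m]
        · rw [hg] at hr2; linarith [h0 m]
      · rw [habs', hv0] at h1; linarith [h2 j]

/-- both-black: never nearly antipodal -/
lemma NAR_bb {j k : Fin n} (hwj : w j = false) (hwk : w k = false) :
    ¬ NAR v w j k := by
  rintro ⟨hjk, H⟩
  have hP : g2 v w j true = v j + 1/2 := by simp [g2, hwj]
  have hQ : g2 v w k false = v k := by simp [g2, hwk]
  have hj0 : 0 < v j := vpos hvinj h0 hv0 (wneq_ne hw0 hwj)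
  have hk0 : 0 < v k := vpos hvinj h0 hv0 (wneq_ne hw0 hwk)
  have hmin : min (g2 v w j true) (g2 v w k false) = v k := by
    rw [hP, hQ]; exact min_eq_right (by linarith [h2 k, h0 j])
  have hmax : max (g2 v w j true) (g2 v w k false) = v j + 1/2 := by
    rw [hP, hQ]; exact max_eq_left (by linarith [h2 k, h0 j])
  have habs' : |g2 v w j true - g2 v w k false| = v j + 1/2 - v k := by
    rw [hP, hQ, abs_of_nonneg (by linarith [h2 k, h0 j])]
  have hvjk : v j ≠ v k := vne hvinj hjk
  rcases lt_or_gt_of_ne hvjk with hlt | hgt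
  · refine H i₀ false (Or.inl ⟨by rw [habs']; linarith, ?_, ?_⟩)
    · rw [hmin]
      have : g2 v w i₀ false = v i₀ + 1/2 := by simp [g2, hw0]
      rw [this, hv0]; linarith [h2 k]
    · rw [hmax]
      have : g2 v w i₀ false = v i₀ + 1/2 := by simp [g2, hw0]
      rw [this, hv0]; linarith
  · refine H i₀ true (Or.inr ⟨by rw [habs']; linarith, Or.inl ?_⟩)
    rw [hmin]
    have : g2 v w i₀ true = v i₀ := by simp [g2, hw0]
    rw [this, hv0]; linarith

/-- crit characterizations -/
lemma CR_tt {j k : Fin n} (hwj : w j = true) (hwk : w k = true) : CRR v w j k := by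
  have hBj : g2 v w j false = v j + 1/2 := by simp [g2, hwj]
  have hBk : g2 v w k false = v k + 1/2 := by simp [g2, hwk]
  rintro (⟨-, hm, -⟩ | ⟨h1, -⟩)
  · rw [hBj, hBk] at hm
    rcases min_cases (v j + 1/2) (v k + 1/2) with ⟨he, -⟩ | ⟨he, -⟩ <;> rw [he] at hm <;>
      [linarith [h0 j]; linarith [h0 k]]
  · rw [hBj, hBk, (by ring : v j + 1/2 - (v k + 1/2) = v j - v k)] at h1
    linarith [habs h0 h2 j k]

lemma CR_tf {j k : Fin n} (hjk : j ≠ k) (hwj : w j = true) (hwk : w k = false) :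
    CRR v w j k ↔ v j < v k := by
  have hBj : g2 v w j false = v j + 1/2 := by simp [g2, hwj]
  have hBk : g2 v w k false = v k := by simp [g2, hwk]
  have hk0 : 0 < v k := vpos hvinj h0 hv0 (wneq_ne hw0 hwk)
  have hmin : min (g2 v w j false) (g2 v w k false) = v k := by
    rw [hBj, hBk]; exact min_eq_right (by linarith [h2 k, h0 j])
  have hmax : max (g2 v w j false) (g2 v w k false) = v j + 1/2 := by
    rw [hBj, hBk]; exact max_eq_left (by linarith [h2 k, h0 j])
  have habs' : |g2 v w j false - g2 v w k false| = v j + 1/2 - v k := by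
    rw [hBj, hBk, abs_of_nonneg (by linarith [h2 k, h0 j])]
  have hvjk : v j ≠ v k := vne hvinj hjk
  constructor
  · intro hcr
    rcases lt_or_gt_of_ne hvjk with hlt | hgt
    · exact hlt
    · exact absurd (Or.inr ⟨by rw [habs']; linarith, Or.inl (by rw [hmin]; exact hk0.le)⟩) hcr
  · intro hlt
    rintro (⟨-, hm, -⟩ | ⟨h1, -⟩)
    · rw [hmin] at hm; linarith
    · rw [habs'] at h1; linarith

lemma CR_ft {j k : Fin n} (hjk : j ≠ k) (hwj : w j = false) (hwk : w k = true) :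
    CRR v w j k ↔ v k < v j := by
  have hBj : g2 v w j false = v j := by simp [g2, hwj]
  have hBk : g2 v w k false = v k + 1/2 := by simp [g2, hwk]
  have hj0 : 0 < v j := vpos hvinj h0 hv0 (wneq_ne hw0 hwj)
  have hmin : min (g2 v w j false) (g2 v w k false) = v j := by
    rw [hBj, hBk]; exact min_eq_left (by linarith [h2 j, h0 k])
  have hmax : max (g2 v w j false) (g2 v w k false) = v k + 1/2 := by
    rw [hBj, hBk]; exact max_eq_right (by linarith [h2 j, h0 k])
  have habs' : |g2 v w j false - g2 v w k false| = v k + 1/2 - v j := by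
    rw [hBj, hBk, abs_of_nonpos (by linarith [h2 j, h0 k])]; ring
  have hvjk : v j ≠ v k := vne hvinj hjk
  constructor
  · intro hcr
    rcases lt_or_gt_of_ne hvjk with hlt | hgt
    · exact absurd (Or.inr ⟨by rw [habs']; linarith, Or.inl (by rw [hmin]; exact hj0.le)⟩) hcr
    · exact hgt
  · intro hlt
    rintro (⟨-, hm, -⟩ | ⟨h1, -⟩)
    · rw [hmin] at hm; linarith
    · rw [habs'] at h1; linarith


end core

lemma bool_invariant (c : ℕ → Bool) (N : ℕ) :
    ((Finset.range N).filter (fun t => c t = true ∧ c (t+1) = false)).card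
      + (if c N = true then 1 else 0)
    = ((Finset.range N).filter (fun t => c t = false ∧ c (t+1) = true)).card
      + (if c 0 = true then 1 else 0) := by
  classical
  induction N with
  | zero => simp
  | succ N ih =>
    rw [Finset.range_add_one, Finset.filter_insert, Finset.filter_insert]
    rcases Bool.dichotomy (c N) with h1 | h1 <;> rcases Bool.dichotomy (c (N+1)) with h2 | h2 <;>
      simp [h1, h2, Finset.card_insert_of_notMem Finset.notMem_range_self] at ih ⊢ <;>
      omega

lemma mixed_card (c : ℕ → Bool) (N : ℕ) :
    ((Finset.range N).filter (fun t => ¬ c t = c (t+1))).card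
    = ((Finset.range N).filter (fun t => c t = true ∧ c (t+1) = false)).card
    + ((Finset.range N).filter (fun t => c t = false ∧ c (t+1) = true)).card := by
  classical
  have hdis : Disjoint ((Finset.range N).filter (fun t => c t = true ∧ c (t+1) = false))
      ((Finset.range N).filter (fun t => c t = false ∧ c (t+1) = true)) := by
    rw [Finset.disjoint_left]
    intro a ha hb
    simp only [Finset.mem_filter] at ha hb
    rw [ha.2.1] at hb
    exact Bool.noConfusion hb.2.1
  rw [← Finset.card_union_of_disjoint hdis, ← Finset.filter_or]
  congr 1
  apply Finset.filter_congr
  intro x _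
  cases hx : c x <;> cases hy : c (x+1) <;> simp


section core2
variable {n : ℕ} {v : Fin n → ℝ} {w : Fin n → Bool} {i₀ : Fin n}
  (hvinj : Function.Injective v) (h0 : ∀ m, 0 ≤ v m) (h2 : ∀ m, v m < 1/2)
  (hv0 : v i₀ = 0) (hw0 : w i₀ = true)

include hvinj h0 h2 hv0 hw0 in
lemma NAR_symm {j k : Fin n} (h : NAR v w j k) : NAR v w k j := by
  have hjk : j ≠ k := h.1
  cases hwj : w j <;> cases hwk : w k
  · exact absurd h (NAR_bb hvinj h0 h2 hv0 hw0 hwj hwk)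
  · rw [NAR_mixed hvinj h0 h2 hv0 hw0 hjk (by rw [hwj, hwk]; simp)] at h
    rw [NAR_mixed hvinj h0 h2 hv0 hw0 hjk.symm (by rw [hwj, hwk]; simp)]
    intro m hm
    exact h m (by rwa [min_comm (v k), max_comm (v k)] at hm)
  · rw [NAR_mixed hvinj h0 h2 hv0 hw0 hjk (by rw [hwj, hwk]; simp)] at h
    rw [NAR_mixed hvinj h0 h2 hv0 hw0 hjk.symm (by rw [hwj, hwk]; simp)]
    intro m hm
    exact h m (by rwa [min_comm (v k), max_comm (v k)] at hm)
  · rw [NAR_ww hvinj h0 h2 hv0 hw0 hjk hwj hwk] at h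
    rw [NAR_ww hvinj h0 h2 hv0 hw0 hjk.symm hwk hwj]
    tauto

include hvinj h0 h2 hv0 hw0 in
lemma core (hn : 2 ≤ n) :
    ∃ s : ℕ,
      {p : Fin n × Fin n | p.1 < p.2 ∧ NAR v w p.1 p.2}.ncard = 2*s+1 ∧
      {p : Fin n × Fin n |
          (p.1 < p.2 ∧ NAR v w p.1 p.2) ∧ CRR v w p.1 p.2}.ncard = s+1 := by
  classical
  have h0n : 0 < n := by omega
  set σp := Tuple.sort v with hσdef
  have hmono : StrictMono (v ∘ σp) :=
    (Tuple.monotone_sort v).strictMono_of_injective (hvinj.comp σp.injective)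
  -- σ 0 = i₀
  have hσ0 : σp ⟨0, h0n⟩ = i₀ := by
    obtain ⟨t, ht⟩ := σp.surjective i₀
    have hle : v (σp ⟨0, h0n⟩) ≤ v (σp t) := hmono.monotone (by exact Fin.mk_le_of_le_val (Nat.zero_le _))
    rw [ht, hv0] at hle
    exact hvinj ((le_antisymm hle (h0 _)).trans hv0.symm)
  set o : ℕ → Fin n := fun t => if h : t < n then σp ⟨t, h⟩ else i₀ with hodef
  set c : ℕ → Bool := fun t => if h : t < n then w (σp ⟨t, h⟩) else false with hcdef
  have hc0 : c 0 = true := by simp only [hcdef, dif_pos h0n, hσ0, hw0]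
  have hcn : c n = false := by simp only [hcdef, dif_neg (lt_irrefl n)]
  have hcw : ∀ t (h : t < n), c t = w (o t) := by
    intro t h; simp only [hcdef, hodef, dif_pos h]
  have ho_lt : ∀ {t t' : ℕ}, t < t' → t' < n → v (o t) < v (o t') := by
    intro t t' h h'
    simp only [hodef, dif_pos h', dif_pos (lt_trans h h')]
    exact hmono (by exact Fin.mk_lt_mk.mpr h)
  have ho_inj : ∀ {t t' : ℕ}, t ≤ n → t' ≤ n → o t = o t' →
      (t = t' ∨ (t = 0 ∧ t' = n) ∨ (t = n ∧ t' = 0)) := by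
    intro t t' ht ht' he
    by_cases h1 : t < n <;> by_cases h2 : t' < n
    · left
      simp only [hodef, dif_pos h1, dif_pos h2] at he
      exact Fin.mk_eq_mk.mp (σp.injective he)
    · have ht'' : t' = n := by omega
      simp only [hodef, dif_pos h1, dif_neg h2, ← hσ0] at he
      have := Fin.mk_eq_mk.mp (σp.injective he)
      omega
    · have htt : t = n := by omega
      simp only [hodef, dif_neg h1, dif_pos h2, ← hσ0] at he
      have := Fin.mk_eq_mk.mp (σp.injective he.symm)
      omega
    · left; omega
  have ho_surj : ∀ m : Fin n, ∃ t, t < n ∧ o t = m := by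
    intro m
    refine ⟨(σp.symm m : Fin n).val, (σp.symm m).isLt, ?_⟩
    simp only [hodef, dif_pos (σp.symm m).isLt, Fin.eta, Equiv.apply_symm_apply]
  have hvmax : ∀ m : Fin n, v m ≤ v (o (n-1)) := by
    intro m
    obtain ⟨t, htn, rfl⟩ := ho_surj m
    rcases Nat.lt_or_ge t (n-1) with h | h
    · exact (ho_lt h (by omega)).le
    · have : t = n - 1 := by omega
      rw [this]
  -- o t ≠ o (t+1) for t < n
  have ho_ne : ∀ {t : ℕ}, t < n → o t ≠ o (t+1) := by
    intro t ht he
    rcases ho_inj (by omega) (by omega) he with h | h | h <;> omega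
  -- nearly antipodal for each mixed gap
  have hNAR_gap : ∀ {t : ℕ}, t < n → c t ≠ c (t+1) → NAR v w (o t) (o (t+1)) := by
    intro t ht hc
    rcases Nat.lt_or_ge (t+1) n with ht1 | ht1
    · -- middle gap: mixed colors, adjacent
      have hwne : w (o t) ≠ w (o (t+1)) := by
        rw [← hcw t ht, ← hcw (t+1) ht1]; exact hc
      have hne : o t ≠ o (t+1) := ho_ne ht
      rw [NAR_mixed hvinj h0 h2 hv0 hw0 hne hwne]
      intro m ⟨hm1, hm2⟩
      have hlt : v (o t) < v (o (t+1)) := ho_lt (Nat.lt_succ_self t) ht1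
      rw [min_eq_left hlt.le] at hm1
      rw [max_eq_right hlt.le] at hm2
      obtain ⟨u, hun, rfl⟩ := ho_surj m
      have h1 : t < u := by
        by_contra hcon
        push_neg at hcon
        rcases Nat.lt_or_ge u t with h | h
        · exact absurd (ho_lt h ht) (by linarith)
        · have : u = t := by omega
          subst this; linarith
      have h2' : u < t + 1 := by
        by_contra hcon
        push_neg at hcon
        rcases Nat.lt_or_ge (t+1) u with h | h
        · exact absurd (ho_lt h hun) (by linarith)
        · have : u = t + 1 := by omega
          subst this; linarith
      omega
    · -- top gap
      have htn : t = n - 1 := by omega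
      have hct : c t = true := by
        have : c (t+1) = false := by
          have : ¬ (t + 1 < n) := by omega
          simp only [hcdef, dif_neg this]
        rcases Bool.dichotomy (c t) with h | h
        · rw [h, this] at hc; exact absurd rfl hc
        · exact h
      have hwt : w (o t) = true := by rw [← hcw t ht]; exact hct
      have hot1 : o (t+1) = i₀ := by
        have : ¬ (t + 1 < n) := by omega
        simp only [hodef, dif_neg this]
      have hne : o t ≠ o (t+1) := ho_ne ht
      rw [hot1] at hne ⊢
      rw [NAR_ww hvinj h0 h2 hv0 hw0 hne hwt hw0]
      right
      exact ⟨rfl, fun m => by rw [htn]; exact hvmax m⟩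
  -- the matching map
  set pairOf : ℕ → Fin n × Fin n :=
    fun t => if o t < o (t+1) then (o t, o (t+1)) else (o (t+1), o t) with hpdef
  have hpair_mem : ∀ {t : ℕ}, t < n → c t ≠ c (t+1) →
      (pairOf t).1 < (pairOf t).2 ∧ NAR v w (pairOf t).1 (pairOf t).2 := by
    intro t ht hc
    have hne : o t ≠ o (t+1) := ho_ne ht
    have hna : NAR v w (o t) (o (t+1)) := hNAR_gap ht hc
    by_cases hlt : o t < o (t+1)
    · simp only [hpdef, if_pos hlt]
      exact ⟨hlt, hna⟩
    · simp only [hpdef, if_neg hlt]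
      exact ⟨lt_of_le_of_ne (le_of_not_gt hlt) (Ne.symm hne), NAR_symm hvinj h0 h2 hv0 hw0 hna⟩
  have hpair_set : ∀ t : ℕ, ((pairOf t).1 = o t ∧ (pairOf t).2 = o (t+1)) ∨
      ((pairOf t).1 = o (t+1) ∧ (pairOf t).2 = o t) := by
    intro t
    by_cases hlt : o t < o (t+1)
    · left; simp only [hpdef, if_pos hlt]; simp
    · right; simp only [hpdef, if_neg hlt]; simp
  -- injectivity of the matching
  have hcontra2 : n = 2 → (¬ c 0 = c 1) → (¬ c 1 = c 2) → False := by
    intro hn2 d0 d1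
    have hcc : c 2 = false := by have := hcn; rwa [hn2] at this
    rcases Bool.dichotomy (c 1) with hb | hb
    · exact d1 (by rw [hb, hcc])
    · exact d0 (by rw [hc0, hb])
  have hinj2 : ∀ t₁ t₂ : ℕ, t₁ < n → t₂ < n → (¬ c t₁ = c (t₁+1)) → (¬ c t₂ = c (t₂+1)) →
      pairOf t₁ = pairOf t₂ → t₁ = t₂ := by
    intro t1 t2 h1 h2 hc1 hc2 he
    have hcase : (o t1 = o t2 ∧ o (t1+1) = o (t2+1)) ∨ (o t1 = o (t2+1) ∧ o (t1+1) = o t2) := by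
      rcases hpair_set t1 with ⟨ha1, ha2⟩ | ⟨ha1, ha2⟩ <;>
        rcases hpair_set t2 with ⟨hb1, hb2⟩ | ⟨hb1, hb2⟩
      · exact Or.inl ⟨by rw [← ha1, ← hb1, he], by rw [← ha2, ← hb2, he]⟩
      · exact Or.inr ⟨by rw [← ha1, ← hb1, he], by rw [← ha2, ← hb2, he]⟩
      · exact Or.inr ⟨by rw [← ha2, ← hb2, he], by rw [← ha1, ← hb1, he]⟩
      · exact Or.inl ⟨by rw [← ha2, ← hb2, he], by rw [← ha1, ← hb1, he]⟩
    rcases hcase with ⟨e1, e2⟩ | ⟨e1, e2⟩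
    · rcases ho_inj (le_of_lt h1) (le_of_lt h2) e1 with h | h | h <;> omega
    · rcases ho_inj (le_of_lt h1) (by omega) e1 with h | h | h
      · -- t1 = t2 + 1
        rcases ho_inj (by omega) (le_of_lt h2) e2 with h' | h' | h'
        · omega
        · omega
        · -- t1 + 1 = n ∧ t2 = 0, t1 = t2 + 1 : n = 2, t1 = 1, t2 = 0
          exfalso
          have hn2 : n = 2 := by omega
          have ht1' : t1 = 1 := by omega
          have ht2' : t2 = 0 := by omega
          rw [ht1'] at hc1; rw [ht2'] at hc2
          exact hcontra2 hn2 hc2 hc1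
      · -- t1 = 0 ∧ t2 + 1 = n
        rcases ho_inj (by omega) (le_of_lt h2) e2 with h' | h' | h'
        · -- t1 + 1 = t2 : n = 2, t1 = 0, t2 = 1
          exfalso
          have hn2 : n = 2 := by omega
          have ht1' : t1 = 0 := by omega
          have ht2' : t2 = 1 := by omega
          rw [ht1'] at hc1; rw [ht2'] at hc2
          exact hcontra2 hn2 hc1 hc2
        · omega
        · omega
      · omega
  -- surjectivity of the matching
  have hsurj2 : ∀ p : Fin n × Fin n, p.1 < p.2 → NAR v w p.1 p.2 →
      ∃ t, (t < n ∧ ¬ c t = c (t+1)) ∧ pairOf t = p := by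
    rintro ⟨j, k⟩ hjk hna
    simp only at hjk hna ⊢
    have hne : j ≠ k := ne_of_lt hjk
    have hmixed : ∀ (hw : w j ≠ w k), ∃ t, (t < n ∧ ¬ c t = c (t+1)) ∧ pairOf t = (j, k) := by
      intro hw
      rw [NAR_mixed hvinj h0 h2 hv0 hw0 hne hw] at hna
      obtain ⟨tj, htjn, htj⟩ := ho_surj j
      obtain ⟨tk, htkn, htk⟩ := ho_surj k
      have hvne' : v j ≠ v k := vne hvinj hne
      rcases lt_or_gt_of_ne hvne' with hvlt | hvgt
      · have h1 : tj < tk := by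
          rcases Nat.lt_trichotomy tj tk with h | h | h
          · exact h
          · exfalso; rw [h, htk] at htj; exact hne (htj.symm ▸ rfl)
          · exfalso; have := ho_lt h htjn; rw [htj, htk] at this; linarith
        have h2' : tk = tj + 1 := by
          by_contra hcon
          have h3 : tj + 1 < tk := by omega
          have hm1 := ho_lt (Nat.lt_succ_self tj) (by omega)
          have hm2 := ho_lt h3 htkn
          rw [htj] at hm1; rw [htk] at hm2
          exact hna (o (tj+1)) ⟨by rw [min_eq_left hvlt.le]; exact hm1,
            by rw [max_eq_right hvlt.le]; exact hm2⟩
        have e2 : o (tj + 1) = k := by rw [← h2']; exact htk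
        refine ⟨tj, ⟨htjn, ?_⟩, ?_⟩
        · have d1 : c tj = w j := by rw [hcw tj htjn, htj]
          have d2 : c (tj+1) = w k := by rw [hcw (tj+1) (by omega), e2]
          rw [d1, d2]; exact hw
        · simp only [hpdef]
          rw [htj, e2, if_pos hjk]
      · have h1 : tk < tj := by
          rcases Nat.lt_trichotomy tk tj with h | h | h
          · exact h
          · exfalso; rw [h, htj] at htk; exact hne (htk ▸ rfl)
          · exfalso; have := ho_lt h htkn; rw [htj, htk] at this; linarith
        have h2' : tj = tk + 1 := by
          by_contra hcon
          have h3 : tk + 1 < tj := by omega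
          have hm1 := ho_lt (Nat.lt_succ_self tk) (by omega)
          have hm2 := ho_lt h3 htjn
          rw [htk] at hm1; rw [htj] at hm2
          exact hna (o (tk+1)) ⟨by rw [min_eq_right hvgt.le]; exact hm1,
            by rw [max_eq_left hvgt.le]; exact hm2⟩
        have e2 : o (tk + 1) = j := by rw [← h2']; exact htj
        refine ⟨tk, ⟨htkn, ?_⟩, ?_⟩
        · have d1 : c tk = w k := by rw [hcw tk htkn, htk]
          have d2 : c (tk+1) = w j := by rw [hcw (tk+1) (by omega), e2]
          rw [d1, d2]; exact fun hh => hw (hh.symm)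
        · simp only [hpdef]
          rw [htk, e2, if_neg (not_lt.mpr (le_of_lt hjk))]
      -- done mixed
    cases hwj : w j <;> cases hwk : w k
    · exact absurd hna (NAR_bb hvinj h0 h2 hv0 hw0 hwj hwk)
    · exact hmixed (by rw [hwj, hwk]; simp)
    · exact hmixed (by rw [hwj, hwk]; simp)
    · rw [NAR_ww hvinj h0 h2 hv0 hw0 hne hwj hwk] at hna
      have htop : ∀ a : Fin n, (∀ m, v m ≤ v a) → o (n-1) = a := by
        intro a hmax
        obtain ⟨u, hun, hua⟩ := ho_surj a
        rcases Nat.lt_or_ge u (n-1) with h | h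
        · exfalso
          have := ho_lt h (by omega)
          rw [hua] at this
          exact absurd this (not_lt.mpr (hmax _))
        · have : u = n - 1 := by omega
          rw [← this]; exact hua
      have ho1 : o (n-1+1) = i₀ := by
        have hnn : ¬ (n-1+1 < n) := by omega
        simp only [hodef, dif_neg hnn]
      have hcn1 : c (n-1+1) = false := by
        have hnn : n - 1 + 1 = n := by omega
        rw [hnn]; exact hcn
      rcases hna with ⟨rfl, hmax⟩ | ⟨rfl, hmax⟩
      · -- j = i₀, k is max
        have hkt : o (n-1) = k := htop k hmax
        refine ⟨n-1, ⟨by omega, ?_⟩, ?_⟩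
        · have d1 : c (n-1) = true := by rw [hcw (n-1) (by omega), hkt]; exact hwk
          rw [d1, hcn1]; simp
        · simp only [hpdef]
          rw [hkt, ho1, if_neg (not_lt.mpr (le_of_lt hjk))]
      · -- k = i₀, j is max
        have hjt : o (n-1) = j := htop j hmax
        refine ⟨n-1, ⟨by omega, ?_⟩, ?_⟩
        · have d1 : c (n-1) = true := by rw [hcw (n-1) (by omega), hjt]; exact hwj
          rw [d1, hcn1]; simp
        · simp only [hpdef]
          rw [hjt, ho1, if_pos hjk]
  -- crit characterization along gaps
  have hcriff : ∀ t : ℕ, t < n → ¬ c t = c (t+1) →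
      (CRR v w (pairOf t).1 (pairOf t).2 ↔ c t = true) := by
    intro t ht hc
    rcases Nat.lt_or_ge (t+1) n with ht1 | ht1
    · have hvlt : v (o t) < v (o (t+1)) := ho_lt (Nat.lt_succ_self t) ht1
      have hone : o t ≠ o (t+1) := ho_ne ht
      have d1 : c t = w (o t) := hcw t ht
      have d2 : c (t+1) = w (o (t+1)) := hcw (t+1) ht1
      by_cases hlt : o t < o (t+1)
      · have hp : pairOf t = (o t, o (t+1)) := by simp only [hpdef, if_pos hlt]
        rw [hp]
        rcases Bool.dichotomy (w (o t)) with hb | hb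
        · have hck : w (o (t+1)) = true := by
            rcases Bool.dichotomy (w (o (t+1))) with hx | hx
            · exfalso; apply hc; rw [d1, d2, hb, hx]
            · exact hx
          rw [CR_ft hvinj h0 h2 hv0 hw0 hone hb hck]
          constructor
          · intro hcc; exact absurd hcc (not_lt.mpr hvlt.le)
          · intro hcc; rw [d1, hb] at hcc; exact absurd hcc (by simp)
        · have hck : w (o (t+1)) = false := by
            rcases Bool.dichotomy (w (o (t+1))) with hx | hx
            · exact hx
            · exfalso; apply hc; rw [d1, d2, hb, hx]
          rw [CR_tf hvinj h0 h2 hv0 hw0 hone hb hck]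
          constructor
          · intro _; rw [d1, hb]
          · intro _; exact hvlt
      · have hp : pairOf t = (o (t+1), o t) := by simp only [hpdef, if_neg hlt]
        rw [hp]
        rcases Bool.dichotomy (w (o t)) with hb | hb
        · have hck : w (o (t+1)) = true := by
            rcases Bool.dichotomy (w (o (t+1))) with hx | hx
            · exfalso; apply hc; rw [d1, d2, hb, hx]
            · exact hx
          rw [CR_tf hvinj h0 h2 hv0 hw0 (Ne.symm hone) hck hb]
          constructor
          · intro hcc; exact absurd hcc (not_lt.mpr hvlt.le)
          · intro hcc; rw [d1, hb] at hcc; exact absurd hcc (by simp)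
        · have hck : w (o (t+1)) = false := by
            rcases Bool.dichotomy (w (o (t+1))) with hx | hx
            · exact hx
            · exfalso; apply hc; rw [d1, d2, hb, hx]
          rw [CR_ft hvinj h0 h2 hv0 hw0 (Ne.symm hone) hck hb]
          constructor
          · intro _; rw [d1, hb]
          · intro _; exact hvlt
    · -- top gap: both endpoints white
      have hct : c t = true := by
        have hcf : c (t+1) = false := by
          have : ¬ (t + 1 < n) := by omega
          simp only [hcdef, dif_neg this]
        rcases Bool.dichotomy (c t) with h | h
        · exfalso; apply hc; rw [h, hcf]
        · exact h
      have hwt : w (o t) = true := by rw [← hcw t ht]; exact hct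
      have hot1 : o (t+1) = i₀ := by
        have : ¬ (t + 1 < n) := by omega
        simp only [hodef, dif_neg this]
      have hw1 : w (o (t+1)) = true := by rw [hot1]; exact hw0
      constructor
      · intro _; exact hct
      · intro _
        rcases hpair_set t with ⟨ha1, ha2⟩ | ⟨ha1, ha2⟩
        · rw [ha1, ha2]; exact CR_tt hvinj h0 h2 hv0 hw0 hwt hw1
        · rw [ha1, ha2]; exact CR_tt hvinj h0 h2 hv0 hw0 hw1 hwt
  -- counting
  classical
  set sval := ((Finset.range n).filter (fun t => c t = false ∧ c (t+1) = true)).card with hsval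
  have hTF : ((Finset.range n).filter (fun t => c t = true ∧ c (t+1) = false)).card = sval + 1 := by
    have := bool_invariant c n
    rw [hc0, hcn] at this
    simpa using this
  have hT : ((Finset.range n).filter (fun t => ¬ c t = c (t+1))).card = 2*sval + 1 := by
    rw [mixed_card c n, hTF]; omega
  refine ⟨sval, ?_, ?_⟩
  · rw [Set.ncard_eq_toFinset_card', Set.toFinset_setOf, ← hT]
    refine (Finset.card_bij (fun t _ => pairOf t) ?_ ?_ ?_).symm
    · intro a ha
      rw [Finset.mem_filter, Finset.mem_range] at ha
      rw [Finset.mem_filter]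
      exact ⟨Finset.mem_univ _, hpair_mem ha.1 ha.2⟩
    · intro a1 ha1 a2 ha2 he
      rw [Finset.mem_filter, Finset.mem_range] at ha1 ha2
      exact hinj2 a1 a2 ha1.1 ha2.1 ha1.2 ha2.2 he
    · intro p hp
      rw [Finset.mem_filter] at hp
      obtain ⟨t, ⟨htn, htc⟩, hte⟩ := hsurj2 p hp.2.1 hp.2.2
      exact ⟨t, by rw [Finset.mem_filter, Finset.mem_range]; exact ⟨htn, htc⟩, hte⟩
  · rw [Set.ncard_eq_toFinset_card', Set.toFinset_setOf, ← hTF]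
    refine (Finset.card_bij (fun t _ => pairOf t) ?_ ?_ ?_).symm
    · intro a ha
      rw [Finset.mem_filter, Finset.mem_range] at ha
      have han := ha.1
      have hat := ha.2.1
      have haf := ha.2.2
      have hmix : ¬ c a = c (a+1) := by rw [hat, haf]; simp
      rw [Finset.mem_filter]
      exact ⟨Finset.mem_univ _, hpair_mem han hmix, (hcriff a han hmix).mpr hat⟩
    · intro a1 ha1 a2 ha2 he
      rw [Finset.mem_filter, Finset.mem_range] at ha1 ha2
      have hmix1 : ¬ c a1 = c (a1+1) := by rw [ha1.2.1, ha1.2.2]; simp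
      have hmix2 : ¬ c a2 = c (a2+1) := by rw [ha2.2.1, ha2.2.2]; simp
      exact hinj2 a1 a2 ha1.1 ha2.1 hmix1 hmix2 he
    · intro p hp
      rw [Finset.mem_filter] at hp
      obtain ⟨t, ⟨htn, htc⟩, hte⟩ := hsurj2 p hp.2.1.1 hp.2.1.2
      have hct : c t = true := by
        apply (hcriff t htn htc).mp
        rw [hte]
        exact hp.2.2
      have hcf : c (t+1) = false := by
        rcases Bool.dichotomy (c (t+1)) with h | h
        · exact h
        · exfalso; apply htc; rw [hct, h]
      exact ⟨t, by rw [Finset.mem_filter, Finset.mem_range]; exact ⟨htn, hct, hcf⟩, hte⟩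

end core2


/-- **Lemma (counting critical arcs at profile points).** For `n ≥ 2` pairwise distinct
points `x 1, …, x n` on the circle, no two of which are antipodal, the number of nearly
antipodal (unordered) pairs is odd, `|A| = 2s + 1`, and each point `x i` lies in the
critical arc of exactly `s + 1` of these pairs. -/
theorem nearlyAntipodal_count {n : ℕ} (hn : 2 ≤ n) (x : Fin n → AddCircle (1 : ℝ))
    (hinj : Function.Injective x)
    (hanti : ∀ k l : Fin n, x k ≠ antipode (x l)) :
    ∃ s : ℕ,
      {p : Fin n × Fin n | p.1 < p.2 ∧ NearlyAntipodal x p.1 p.2}.ncard = 2 * s + 1 ∧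
      ∀ i : Fin n,
        {p : Fin n × Fin n |
            (p.1 < p.2 ∧ NearlyAntipodal x p.1 p.2) ∧ x i ∈ crit (x p.1) (x p.2)}.ncard
          = s + 1 := by
  classical
  have key : ∀ i : Fin n, ∃ s : ℕ,
      {p : Fin n × Fin n | p.1 < p.2 ∧ NearlyAntipodal x p.1 p.2}.ncard = 2 * s + 1 ∧
      {p : Fin n × Fin n |
          (p.1 < p.2 ∧ NearlyAntipodal x p.1 p.2) ∧ x i ∈ crit (x p.1) (x p.2)}.ncard
        = s + 1 := by
    intro i
    choose g hg1 hg2 using fun m => AddCircle.eq_coe_Ico (x m - x i)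
    have hx : ∀ m, x m = x i + ((g m : ℝ) : 𝕊) := fun m => by rw [hg2]; abel
    have hgi : g i = 0 := by
      have h1 : ((g i : ℝ) : 𝕊) = ((0 : ℝ) : 𝕊) := by rw [hg2]; simp
      exact (coe_eq_coe_Ico (hg1 i) (by norm_num)).mp h1
    set w : Fin n → Bool := fun m => decide (g m < 1/2) with hwdef
    set v : Fin n → ℝ := fun m => if g m < 1/2 then g m else g m - 1/2 with hvdef
    have h0 : ∀ m, 0 ≤ v m := by
      intro m
      simp only [hvdef]
      split_ifs with h
      · exact (hg1 m).1
      · push_neg at h; linarith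
    have h2 : ∀ m, v m < 1/2 := by
      intro m
      simp only [hvdef]
      split_ifs with h
      · exact h
      · have := (hg1 m).2; linarith
    have hv0 : v i = 0 := by simp only [hvdef, hgi]; norm_num
    have hw0 : w i = true := by simp only [hwdef, decide_eq_true_eq, hgi]; norm_num
    -- the positions of the points and their antipodes
    have hpt : ∀ m b, (if b then x m else antipode (x m)) = x i + ((g2 v w m b : ℝ) : 𝕊) := by
      intro m b
      by_cases h : g m < 1/2
      · have hwm : w m = true := by simp only [hwdef, decide_eq_true_eq]; exact h
        have hvm : v m = g m := by simp only [hvdef]; rw [if_pos h]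
        cases b
        · have hgg : g2 v w m false = g m + 1/2 := by
            simp [g2, hwm, hvm]
          rw [if_neg (by simp), hgg, hx m]
          unfold antipode
          first
          | rw [AddCircle.coe_add, add_assoc]
          | rw [AddCircle.coe_add]
        · have hgg : g2 v w m true = g m := by simp [g2, hwm, hvm]
          rw [if_pos rfl, hgg]
          exact hx m
      · have hwm : w m = false := by simp only [hwdef, decide_eq_false_iff_not]; exact h
        have hvm : v m = g m - 1/2 := by simp only [hvdef]; rw [if_neg h]
        cases b
        · have hgg : g2 v w m false = g m - 1/2 := by simp [g2, hwm, hvm]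
          rw [if_neg (by simp), hgg, hx m]
          unfold antipode
          rw [show ((g m - 1/2 : ℝ) : 𝕊) = ((g m + 1/2 : ℝ) : 𝕊) from by
            rw [show (g m + 1/2 : ℝ) = (g m - 1/2) + 1 by ring, AddCircle.coe_add_period]]
          first
          | rw [AddCircle.coe_add, add_assoc]
          | rw [AddCircle.coe_add]
        · have hgg : g2 v w m true = g m := by
            simp only [g2, hwm, hvm]
            norm_num
          rw [if_pos rfl, hgg]
          exact hx m
    have hrange : ∀ m b, g2 v w m b ∈ Ico (0:ℝ) 1 := by
      intro m b
      rcases (by unfold g2; split <;> [left; right] <;> rfl :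
          g2 v w m b = v m ∨ g2 v w m b = v m + 1/2) with hg | hg <;> rw [hg]
      · exact ⟨h0 m, by linarith [h2 m]⟩
      · exact ⟨by linarith [h0 m], by linarith [h2 m]⟩
    have hvinj : Function.Injective v := by
      intro m l he
      simp only [hvdef] at he
      by_cases hm : g m < 1/2 <;> by_cases hl : g l < 1/2
      · rw [if_pos hm, if_pos hl] at he
        exact hinj (by rw [hx m, hx l, he])
      · rw [if_pos hm, if_neg hl] at he
        exfalso
        apply hanti l m
        rw [hx l, hx m, show g l = g m + 1/2 by linarith]
        unfold antipode
        first
        | rw [AddCircle.coe_add, add_assoc]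
        | rw [AddCircle.coe_add]
      · rw [if_neg hm, if_pos hl] at he
        exfalso
        apply hanti m l
        rw [hx m, hx l, show g m = g l + 1/2 by linarith]
        unfold antipode
        first
        | rw [AddCircle.coe_add, add_assoc]
        | rw [AddCircle.coe_add]
      · rw [if_neg hm, if_neg hl] at he
        exact hinj (by rw [hx m, hx l, show g m = g l by linarith])
    -- endpoints as base-plus-coordinate
    have hXj : ∀ j : Fin n, x j = x i + ((g2 v w j true : ℝ) : 𝕊) := by
      intro j
      have := hpt j true
      rwa [if_pos rfl] at this
    have hAj : ∀ j : Fin n, antipode (x j) = x i + ((g2 v w j false : ℝ) : 𝕊) := by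
      intro j
      have := hpt j false
      rwa [if_neg (by simp)] at this
    -- transfer of the nearly-antipodal predicate
    have hNA : ∀ j k : Fin n, NearlyAntipodal x j k ↔ NAR v w j k := by
      intro j k
      have hbridge : j ≠ k → ∀ m b, ((if b then x m else antipode (x m)) ∈
          openArc (x j) (antipode (x k))
          ↔ OpenCond (g2 v w j true) (g2 v w k false) (g2 v w m b)) := by
        intro hne m b
        have hnepq : g2 v w j true ≠ g2 v w k false := by
          intro h
          apply hanti j k
          rw [hXj j, hAj k, h]
        have hhalfpq : |g2 v w j true - g2 v w k false| ≠ 1/2 := by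
          intro habs'
          rcases (abs_eq (by norm_num : (0:ℝ) ≤ 1/2)).mp habs' with hd | hd
          · apply hne
            apply hinj
            have e3 : x j = antipode (antipode (x k)) := by
              rw [hXj j, show g2 v w j true = g2 v w k false + 1/2 by linarith,
                AddCircle.coe_add, ← add_assoc, ← hAj k]
              rfl
            rw [e3, antipode_antipode]
          · apply hne
            apply hinj
            have e3 : antipode (x k) = antipode (x j) := by
              rw [hAj k, show g2 v w k false = g2 v w j true + 1/2 by linarith,
                AddCircle.coe_add, ← add_assoc, ← hXj j]
              rfl
            exact antipode_inj e3.symm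
        rw [hpt m b, hXj j, hAj k]
        exact mem_openArc_real (hrange j true) (hrange k false) (hrange m b) hnepq hhalfpq
      constructor
      · rintro ⟨hne, H1, H2⟩
        refine ⟨hne, fun m b => ?_⟩
        rw [← hbridge hne m b]
        cases b
        · simp only [Bool.false_eq_true, if_false]
          intro hmem2
          exact H2 m (arc2_swap.mpr hmem2)
        · simp only [if_true]
          exact H1 m
      · rintro ⟨hne, H⟩
        refine ⟨hne, fun m hmem => ?_, fun m hmem => ?_⟩
        · have hb := hbridge hne m true
          simp only [if_true] at hb
          exact H m true (hb.mp hmem)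
        · have hb := hbridge hne m false
          simp only [Bool.false_eq_true, if_false] at hb
          exact H m false (hb.mp (arc2_swap.mp hmem))
    -- transfer of the crit predicate
    have hCR : ∀ j k : Fin n, j ≠ k → (x i ∈ crit (x j) (x k) ↔ CRR v w j k) := by
      intro j k hne
      have hnepq : g2 v w j false ≠ g2 v w k false := by
        intro h
        apply hne
        apply hinj
        apply antipode_inj
        rw [hAj j, hAj k, h]
      have hhalfpq : |g2 v w j false - g2 v w k false| ≠ 1/2 := by
        intro habs'
        rcases (abs_eq (by norm_num : (0:ℝ) ≤ 1/2)).mp habs' with hd | hd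
        · apply hanti j k
          have e3 : antipode (x k) = x j := by
            rw [hAj k, show g2 v w k false = g2 v w j false - 1/2 by linarith]
            rw [show ((g2 v w j false - 1/2 : ℝ) : 𝕊) = ((g2 v w j false + 1/2 : ℝ) : 𝕊) from by
              rw [show (g2 v w j false + 1/2 : ℝ) = (g2 v w j false - 1/2) + 1 by ring,
                AddCircle.coe_add_period]]
            rw [AddCircle.coe_add, ← add_assoc, ← hAj j]
            exact antipode_antipode (x j)
          exact e3.symm
        · apply hanti k j
          have e3 : antipode (x j) = x k := by
            rw [hAj j, show g2 v w j false = g2 v w k false - 1/2 by linarith]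
            rw [show ((g2 v w k false - 1/2 : ℝ) : 𝕊) = ((g2 v w k false + 1/2 : ℝ) : 𝕊) from by
              rw [show (g2 v w k false + 1/2 : ℝ) = (g2 v w k false - 1/2) + 1 by ring,
                AddCircle.coe_add_period]]
            rw [AddCircle.coe_add, ← add_assoc, ← hAj k]
            exact antipode_antipode (x k)
          exact e3.symm
      have hx0 : x i = x i + (((0:ℝ)) : 𝕊) := by
        norm_num
      simp only [crit, mem_compl_iff]
      constructor
      · intro hm
        intro hcc
        apply hm
        rw [hx0, hAj j, hAj k] at *
        exact (mem_closedArc_real (hrange j false) (hrange k false)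
          (by norm_num) hnepq hhalfpq).mpr hcc
      · intro hm hmem
        apply hm
        rw [hx0, hAj j, hAj k] at hmem
        exact (mem_closedArc_real (hrange j false) (hrange k false)
          (by norm_num) hnepq hhalfpq).mp hmem
    obtain ⟨s, hs1, hs2⟩ := core hvinj h0 h2 hv0 hw0 hn
    refine ⟨s, ?_, ?_⟩
    · rw [show {p : Fin n × Fin n | p.1 < p.2 ∧ NearlyAntipodal x p.1 p.2}
          = {p : Fin n × Fin n | p.1 < p.2 ∧ NAR v w p.1 p.2} from
        Set.ext fun p => and_congr_right fun _ => hNA p.1 p.2]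
      exact hs1
    · have hseteq2 : {p : Fin n × Fin n | (p.1 < p.2 ∧ NearlyAntipodal x p.1 p.2) ∧
            x i ∈ crit (x p.1) (x p.2)}
          = {p : Fin n × Fin n | (p.1 < p.2 ∧ NAR v w p.1 p.2) ∧ CRR v w p.1 p.2} := by
        ext p
        simp only [mem_setOf_eq]
        constructor
        · rintro ⟨⟨hlt, hna⟩, hcr⟩
          exact ⟨⟨hlt, (hNA p.1 p.2).mp hna⟩, (hCR p.1 p.2 (ne_of_lt hlt)).mp hcr⟩
        · rintro ⟨⟨hlt, hna⟩, hcr⟩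
          exact ⟨⟨hlt, (hNA p.1 p.2).mpr hna⟩, (hCR p.1 p.2 (ne_of_lt hlt)).mpr hcr⟩
      rw [hseteq2]
      exact hs2
  obtain ⟨s, hs1, _⟩ := key ⟨0, by omega⟩
  refine ⟨s, hs1, fun i => ?_⟩
  obtain ⟨s', h1', h2'⟩ := key i
  have hss : s' = s := by rw [hs1] at h1'; omega
  rw [← hss]
  exact h2'
end

section
/- Let m ≥ 1, let t ∈ ℝ, and let z_0 ≤ z_1 ≤ … ≤ z_m be real numbers with z_0 = t, z_m = t + 1, and z_k = t + 1/2 for some index k. Then ∑_{j=0}^{m−1} (z_{j+1} − z_j) · dist( t̄, ((z_j + z_{j+1})/2)‾ ) = 1/4, where dist is the metric of AddCircle 1 and bars denote images of real numbers in AddCircle 1. (This is the exact cost, to an agent at t, of choosing the center of each arc of a partition of the circle with probability equal to the arc length, when both t and its antipodal point are partition points.) -/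
lemma aux_dist (x y : ℝ) (h : |x - y| ≤ 1/2) :
    dist (x : AddCircle (1:ℝ)) (y : AddCircle (1:ℝ)) = |x - y| := by
  rw [dist_eq_norm, ← AddCircle.coe_sub]
  exact (AddCircle.norm_coe_eq_abs_iff (p := (1:ℝ)) (by norm_num)).mpr (by simpa using h)

lemma aux_shift (x : ℝ) : ((x : ℝ) : AddCircle (1:ℝ)) = ((x - 1 : ℝ) : AddCircle (1:ℝ)) := by
  rw [AddCircle.coe_sub]
  have : ((1:ℝ) : AddCircle (1:ℝ)) = 0 := AddCircle.coe_period 1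
  rw [this, sub_zero]

/-- **Exact cost of the Random Center lottery when the agent and its antipode are
partition points.** Let `t ∈ ℝ` and let `t = z 0 ≤ z 1 ≤ ⋯ ≤ z m = t + 1` be a cyclic
partition of the circle `ℝ/ℤ` (circumference 1) with `z k = t + 1/2` for some `k`.
Choosing the center of each arc `[z j, z (j+1)]` with probability equal to its length,
the expected distance from `t` is exactly `1/4`. -/
theorem random_center_cost_eq_quarter {m : ℕ} (hm : 1 ≤ m) (t : ℝ) (z : ℕ → ℝ)
    (hmono : ∀ j < m, z j ≤ z (j + 1)) (h0 : z 0 = t) (hend : z m = t + 1)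
    (hanti : ∃ k ≤ m, z k = t + 1/2) :
    ∑ j ∈ Finset.range m,
      (z (j + 1) - z j) *
        dist ((t : AddCircle (1 : ℝ))) (((z j + z (j + 1)) / 2 : ℝ) : AddCircle (1 : ℝ))
      = 1/4 := by
  obtain ⟨k, hkm, hzk⟩ := hanti
  -- monotonicity on the partition
  have mono : ∀ i j, i ≤ j → j ≤ m → z i ≤ z j := by
    intro i j hij hjm
    induction j with
    | zero => simp_all
    | succ n ih =>
      rcases Nat.lt_or_ge i (n+1) with h | h
      · exact le_trans (ih (Nat.lt_succ_iff.mp h) (le_trans (Nat.le_succ n) hjm))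
          (hmono n (Nat.lt_of_succ_le hjm))
      · have : i = n + 1 := le_antisymm hij h
        simp [this]
  have hkm' : k < m := by
    rcases lt_or_eq_of_le hkm with h | h
    · exact h
    · exfalso; rw [h, hend] at hzk; linarith
  -- the telescoping potential
  set F : ℕ → ℝ := fun j => if j ≤ k then (z j - t)^2 / 2 else 1/4 - (z j - (t+1))^2 / 2 with hF
  have key : ∀ j < m,
      (z (j + 1) - z j) *
        dist ((t : AddCircle (1 : ℝ))) (((z j + z (j + 1)) / 2 : ℝ) : AddCircle (1 : ℝ))
      = F (j+1) - F j := by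
    intro j hj
    rcases Nat.lt_or_ge j k with hjk | hjk
    · -- arc inside [t, t+1/2]
      have h1 : t ≤ z j := by rw [← h0]; exact mono 0 j (Nat.zero_le _) (le_of_lt hj)
      have h2 : z (j+1) ≤ t + 1/2 := by rw [← hzk]; exact mono (j+1) k hjk hkm
      have h3 : z j ≤ z (j+1) := hmono j hj
      have hd : dist ((t : AddCircle (1 : ℝ))) (((z j + z (j + 1)) / 2 : ℝ) : AddCircle (1 : ℝ))
          = (z j + z (j+1))/2 - t := by
        rw [aux_dist t ((z j + z (j+1))/2) (by rw [abs_le]; constructor <;> linarith)]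
        rw [abs_sub_comm, abs_of_nonneg (by linarith)]
      rw [hd, hF]
      simp only [hjk.le, Nat.succ_le_of_lt hjk, if_pos]
      ring
    · -- arc inside [t+1/2, t+1]
      have h1 : t + 1/2 ≤ z j := by rw [← hzk]; exact mono k j hjk (le_of_lt hj)
      have h2 : z (j+1) ≤ t + 1 := by rw [← hend]; exact mono (j+1) m hj (le_refl m)
      have h3 : z j ≤ z (j+1) := hmono j hj
      have hd : dist ((t : AddCircle (1 : ℝ))) (((z j + z (j + 1)) / 2 : ℝ) : AddCircle (1 : ℝ))
          = t + 1 - (z j + z (j+1))/2 := by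
        rw [aux_shift ((z j + z (j+1))/2)]
        rw [aux_dist t ((z j + z (j+1))/2 - 1) (by rw [abs_le]; constructor <;> linarith)]
        rw [abs_of_nonneg (by linarith)]; ring
      rw [hd, hF]
      have hj1 : ¬ (j + 1 ≤ k) := by omega
      simp only [hj1, if_neg, if_false]
      rcases Nat.lt_or_ge k j with hkj | hkj
      · have : ¬ (j ≤ k) := by omega
        simp only [this, if_false]
        ring
      · have hjek : j = k := le_antisymm hkj hjk
        subst hjek
        simp only [le_refl, if_pos]
        rw [hzk]; ring
  calc ∑ j ∈ Finset.range m,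
      (z (j + 1) - z j) *
        dist ((t : AddCircle (1 : ℝ))) (((z j + z (j + 1)) / 2 : ℝ) : AddCircle (1 : ℝ))
      = ∑ j ∈ Finset.range m, (F (j+1) - F j) := by
        apply Finset.sum_congr rfl
        intro j hj
        exact key j (Finset.mem_range.mp hj)
    _ = F m - F 0 := Finset.sum_range_sub F m
    _ = 1/4 := by
        have hmk : ¬ (m ≤ k) := by omega
        have h0k : 0 ≤ k := Nat.zero_le k
        simp only [hF, hmk, if_false, h0k, if_pos, hend, h0]
        ring
end

section
/- Let m ≥ 1 and let z_0 ≤ z_1 ≤ … ≤ z_m be real numbers with z_m = z_0 + 1 and z_{j+1} − z_j ≤ 1/2 for every j. Let t ∈ [z_0, z_m] be such that some z_k equals t + 1/2 or t − 1/2 (i.e., the antipodal point of t is a partition point). Then ∑_{j=0}^{m−1} (z_{j+1} − z_j) · dist( t̄, ((z_j + z_{j+1})/2)‾ ) ≤ 1/4, where dist is the metric of AddCircle 1 and bars denote images of real numbers in AddCircle 1. (The expected cost of an agent under the Random Center mechanism is at most 1/4.) -/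
lemma distle (t c v : ℝ) (n : ℤ) (h : v = t + n) :
    dist ((t : AddCircle (1:ℝ))) ((c:ℝ) : AddCircle (1:ℝ)) ≤ |c - v| := by
  have h0 : ((v - t : ℝ) : AddCircle (1:ℝ)) = 0 :=
    (AddCircle.coe_eq_zero_iff _).mpr ⟨n, by simp [h]⟩
  have hv : ((v : ℝ) : AddCircle (1:ℝ)) = (t : AddCircle (1:ℝ)) := by
    have := AddCircle.coe_sub (1:ℝ) v t
    rw [h0] at this
    exact (sub_eq_zero.mp this.symm)
  rw [← hv, dist_eq_norm, ← AddCircle.coe_sub]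
  calc ‖((v - c : ℝ) : AddCircle (1:ℝ))‖ ≤ ‖v - c‖ := QuotientAddGroup.norm_mk_le_norm
    _ = |c - v| := by rw [Real.norm_eq_abs, abs_sub_comm]

lemma alg (a b v D : ℝ) (hab : a ≤ b) (hD0 : 0 ≤ D) (hD : D ≤ |(a+b)/2 - v|) :
    (b-a) * D ≤ ((b-v)*|b-v| - (a-v)*|a-v|)/2 := by
  have h1 : (b-a)*D ≤ (b-a)*|(a+b)/2 - v| :=
    mul_le_mul_of_nonneg_left hD (by linarith)
  rcases abs_cases ((a+b)/2 - v) with ⟨h,_⟩|⟨h,_⟩ <;>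
  rcases abs_cases (b-v) with ⟨hb,hb'⟩|⟨hb,hb'⟩ <;>
  rcases abs_cases (a-v) with ⟨ha,ha'⟩|⟨ha,ha'⟩ <;> nlinarith

noncomputable def Phi (t x : ℝ) : ℝ :=
  if x ≤ t - 1/2 then -(1/4) + (x-(t-1))*|x-(t-1)|/2
  else if x ≤ t + 1/2 then (x-t)*|x-t|/2
  else 1/4 + (x-(t+1))*|x-(t+1)|/2

lemma Phi_eq1 {t x : ℝ} (h : x ≤ t - 1/2) :
    Phi t x = -(1/4) + (x-(t-1))*|x-(t-1)|/2 := if_pos h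

lemma Phi_eq2 {t x : ℝ} (h1 : t - 1/2 ≤ x) (h2 : x ≤ t + 1/2) :
    Phi t x = (x-t)*|x-t|/2 := by
  unfold Phi
  split_ifs with ha hb
  · have hx : x = t - 1/2 := le_antisymm ha h1
    subst hx
    rw [abs_of_nonneg (by linarith), abs_of_nonpos (by linarith)]
    ring
  · rfl

lemma Phi_eq3 {t x : ℝ} (h : t + 1/2 ≤ x) :
    Phi t x = 1/4 + (x-(t+1))*|x-(t+1)|/2 := by
  unfold Phi
  split_ifs with ha hb
  · linarith
  · have hx : x = t + 1/2 := le_antisymm hb h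
    subst hx
    rw [abs_of_nonneg (by linarith), abs_of_nonpos (by linarith)]
    ring
  · rfl

lemma Phi_tele {t x : ℝ} (h0 : x ≤ t) (h1 : t ≤ x + 1) :
    Phi t (x + 1) - Phi t x = 1/4 := by
  rcases le_or_gt x (t - 1/2) with h | h
  · rw [Phi_eq1 h, Phi_eq2 (show t - 1/2 ≤ x + 1 by linarith) (show x + 1 ≤ t + 1/2 by linarith)]
    have : x + 1 - t = x - (t-1) := by ring
    rw [this]; ring
  · rw [Phi_eq3 (show t + 1/2 ≤ x + 1 by linarith),
      Phi_eq2 (show t - 1/2 ≤ x by linarith) (show x ≤ t + 1/2 by linarith)]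
    have : x + 1 - (t+1) = x - t := by ring
    rw [this]; ring

/-- **The Random Center mechanism costs an agent at most `1/4`.** Let
`z 0 ≤ z 1 ≤ ⋯ ≤ z m = z 0 + 1` be a cyclic partition of the circle `ℝ/ℤ`
(circumference 1) into arcs of length at most `1/2` each, and let `t ∈ [z 0, z m]` be a
point whose antipodal point is a partition point (some `z k` equals `t + 1/2` or
`t - 1/2`). Choosing the center of each arc `[z j, z (j+1)]` with probability equal to
its length, the expected distance from `t` is at most `1/4`. -/
theorem random_center_cost_le_quarter {m : ℕ} (hm : 1 ≤ m) (z : ℕ → ℝ)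
    (hmono : ∀ j < m, z j ≤ z (j + 1)) (hcyc : z m = z 0 + 1)
    (hsemi : ∀ j < m, z (j + 1) - z j ≤ 1/2)
    (t : ℝ) (ht0 : z 0 ≤ t) (ht1 : t ≤ z m)
    (hanti : ∃ k ≤ m, z k = t + 1/2 ∨ z k = t - 1/2) :
    ∑ j ∈ Finset.range m,
      (z (j + 1) - z j) *
        dist ((t : AddCircle (1 : ℝ))) (((z j + z (j + 1)) / 2 : ℝ) : AddCircle (1 : ℝ))
      ≤ 1/4 := by
  have mono : ∀ {i j : ℕ}, i ≤ j → j ≤ m → z i ≤ z j := by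
    intro i j hij hjm
    induction j with
    | zero =>
      have : i = 0 := Nat.le_zero.mp hij
      simp [this]
    | succ n ih =>
      rcases Nat.lt_or_ge i (n+1) with h | h
      · exact le_trans (ih (Nat.lt_succ_iff.mp h) (by omega)) (hmono n (by omega))
      · have : i = n+1 := le_antisymm hij h
        simp [this]
  obtain ⟨k, hkm, hk⟩ := hanti
  have key : ∀ j ∈ Finset.range m,
      (z (j + 1) - z j) *
        dist ((t : AddCircle (1 : ℝ))) (((z j + z (j + 1)) / 2 : ℝ) : AddCircle (1 : ℝ))
      ≤ Phi t (z (j+1)) - Phi t (z j) := by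
    intro j hj
    rw [Finset.mem_range] at hj
    have hab : z j ≤ z (j+1) := hmono j hj
    rcases hk with hk | hk
    · -- z k = t + 1/2 : all arcs have z j ≥ t - 1/2
      have hp1 : t - 1/2 ≤ z 0 := by
        have h1 : z k ≤ z m := mono hkm le_rfl
        rw [hk, hcyc] at h1; linarith
      rcases Nat.lt_or_ge j k with hjk | hjk
      · have hb : z (j+1) ≤ t + 1/2 := hk ▸ mono hjk hkm
        have ha : t - 1/2 ≤ z j := le_trans hp1 (mono (Nat.zero_le j) (by omega))
        rw [Phi_eq2 (le_trans ha hab) hb, Phi_eq2 ha (le_trans hab hb)]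
        have hD := distle t ((z j + z (j+1))/2) t 0 (by simp)
        have := alg (z j) (z (j+1)) t _ hab dist_nonneg hD
        linarith
      · have ha : t + 1/2 ≤ z j := hk ▸ mono hjk (by omega)
        rw [Phi_eq3 (le_trans ha hab), Phi_eq3 ha]
        have hD := distle t ((z j + z (j+1))/2) (t+1) 1 (by push_cast; ring)
        have := alg (z j) (z (j+1)) (t+1) _ hab dist_nonneg hD
        linarith
    · -- z k = t - 1/2 : all arcs have z (j+1) ≤ t + 1/2
      have hp2 : z m ≤ t + 1/2 := by
        have h1 : z 0 ≤ z k := mono (Nat.zero_le k) hkm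
        rw [hk] at h1; linarith [hcyc]
      rcases Nat.lt_or_ge j k with hjk | hjk
      · have hb : z (j+1) ≤ t - 1/2 := hk ▸ mono hjk hkm
        rw [Phi_eq1 hb, Phi_eq1 (le_trans hab hb)]
        have hD := distle t ((z j + z (j+1))/2) (t-1) (-1) (by push_cast; ring)
        have := alg (z j) (z (j+1)) (t-1) _ hab dist_nonneg hD
        linarith
      · have ha : t - 1/2 ≤ z j := hk ▸ mono hjk (by omega)
        have hb : z (j+1) ≤ t + 1/2 := le_trans (mono (show j+1 ≤ m by omega) le_rfl) hp2
        rw [Phi_eq2 (le_trans ha hab) hb, Phi_eq2 ha (le_trans hab hb)]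
        have hD := distle t ((z j + z (j+1))/2) t 0 (by simp)
        have := alg (z j) (z (j+1)) t _ hab dist_nonneg hD
        linarith
  calc ∑ j ∈ Finset.range m,
      (z (j + 1) - z j) *
        dist ((t : AddCircle (1 : ℝ))) (((z j + z (j + 1)) / 2 : ℝ) : AddCircle (1 : ℝ))
      ≤ ∑ j ∈ Finset.range m, (Phi t (z (j+1)) - Phi t (z j)) := Finset.sum_le_sum key
    _ = Phi t (z m) - Phi t (z 0) := Finset.sum_range_sub (fun j => Phi t (z j)) m
    _ = 1/4 := by
        rw [hcyc]
        exact Phi_tele ht0 (by rw [hcyc] at ht1; linarith)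
end

section
/- Let (X,d) be a metric space, let n ≥ 1, let x_1,…,x_n ∈ X, let y ∈ X, and set M = max_j d(y, x_j). Then (1/(n+2)) · ( 2·M + ∑_{i=1}^n max_j d(x_i, x_j) ) ≤ (2 − 2/(n+2)) · M. (The mechanism that chooses each agent's location with probability 1/(n+2) and a point of maximum cost at most M—in particular the center—with probability 2/(n+2) is a (2 − 2/(n+2))-approximation for the maximum cost.) -/
/-- **A (2 - 2/(n+2))-approximation for the maximum cost.** In any metric space,
for agents at `x 1, …, x n` (`n ≥ 1`), a location `y`, and `M = max_j d(y, x j)`: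
the mechanism choosing each agent's location with probability `1/(n+2)` and a point of
maximum cost at most `M` (e.g. the center) with probability `2/(n+2)` has expected
maximum cost `(1/(n+2))·(2M + ∑ i max_j d(x i, x j)) ≤ (2 - 2/(n+2))·M`. -/
theorem center_dictators_max_cost_approx {X : Type*} [MetricSpace X] {n : ℕ}
    (hn : 0 < n) (x : Fin n → X) (y : X) (M : ℝ)
    (hM : M = Finset.univ.sup' ⟨⟨0, hn⟩, Finset.mem_univ _⟩ (fun j => dist y (x j))) :
    (1 / ((n : ℝ) + 2)) *
        (2 * M + ∑ i : Fin n,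
          Finset.univ.sup' ⟨⟨0, hn⟩, Finset.mem_univ _⟩ (fun j => dist (x i) (x j)))
      ≤ (2 - 2 / ((n : ℝ) + 2)) * M := by
  have hle : ∀ j : Fin n, dist y (x j) ≤ M := by
    intro j
    rw [hM]
    exact Finset.le_sup' (fun j => dist y (x j)) (Finset.mem_univ j)
  have hM0 : 0 ≤ M := le_trans dist_nonneg (hle ⟨0, hn⟩)
  have hsum : (∑ i : Fin n,
      Finset.univ.sup' ⟨⟨0, hn⟩, Finset.mem_univ _⟩ (fun j => dist (x i) (x j)))
      ≤ n * (2 * M) := by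
    calc _ ≤ ∑ _i : Fin n, 2 * M := by
            apply Finset.sum_le_sum
            intro i _
            apply Finset.sup'_le
            intro j _
            calc dist (x i) (x j) ≤ dist (x i) y + dist y (x j) := dist_triangle _ _ _
              _ ≤ M + M := by
                  have := hle i; rw [dist_comm] at this
                  exact add_le_add this (hle j)
              _ = 2 * M := by ring
      _ = n * (2 * M) := by simp [Finset.sum_const, mul_comm]
  have hpos : (0:ℝ) < (n:ℝ) + 2 := by positivity
  rw [div_mul_eq_mul_div, one_mul, div_le_iff₀ hpos]
  have : 2 * M + (∑ i : Fin n,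
      Finset.univ.sup' ⟨⟨0, hn⟩, Finset.mem_univ _⟩ (fun j => dist (x i) (x j)))
      ≤ 2 * M + n * (2 * M) := by linarith
  calc _ ≤ 2 * M + (n:ℝ) * (2 * M) := this
    _ ≤ (2 - 2 / ((n : ℝ) + 2)) * M * ((n:ℝ) + 2) := by
        field_simp
        ring_nf
        nlinarith [hM0]
end

section
/- Let n ≥ 1 and x_1,…,x_n ∈ ℝ, and set a = min_i x_i and b = max_i x_i. Then (1/4)·max_i |x_i − a| + (1/4)·max_i |x_i − b| + (1/2)·max_i |x_i − (a+b)/2| = (3/4)·(b − a), and for every y ∈ ℝ, max_i |x_i − y| ≥ (b − a)/2. Hence the Left-Right-Middle mechanism is a 3/2-approximation for the maximum cost on the line. -/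
/-- **The Left-Right-Middle mechanism is a 3/2-approximation for the maximum cost on a
line.** For agents at `x 1, …, x n ∈ ℝ` (`n ≥ 1`), with `a = min_i x i` and
`b = max_i x i`: the expected maximum cost of the LRM mechanism (which returns `a` with
probability 1/4, `b` with probability 1/4, and `(a+b)/2` with probability 1/2) equals
`(3/4)·(b - a)`, while the maximum cost of any location `y` is at least `(b - a)/2`. -/
theorem lrm_max_cost_three_halves {n : ℕ} (hn : 0 < n) (x : Fin n → ℝ) (a b : ℝ)
    (ha : a = Finset.univ.inf' ⟨⟨0, hn⟩, Finset.mem_univ _⟩ x)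
    (hb : b = Finset.univ.sup' ⟨⟨0, hn⟩, Finset.mem_univ _⟩ x) :
    ((1/4) * Finset.univ.sup' ⟨⟨0, hn⟩, Finset.mem_univ _⟩ (fun i => |x i - a|)
      + (1/4) * Finset.univ.sup' ⟨⟨0, hn⟩, Finset.mem_univ _⟩ (fun i => |x i - b|)
      + (1/2) * Finset.univ.sup' ⟨⟨0, hn⟩, Finset.mem_univ _⟩
          (fun i => |x i - (a + b)/2|)
      = (3/4) * (b - a)) ∧
    ∀ y : ℝ,
      (b - a) / 2 ≤ Finset.univ.sup' ⟨⟨0, hn⟩, Finset.mem_univ _⟩ (fun i => |x i - y|) := by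
  have hne : (Finset.univ : Finset (Fin n)).Nonempty := ⟨⟨0, hn⟩, Finset.mem_univ _⟩
  have hal : ∀ i, a ≤ x i := fun i => ha ▸ Finset.inf'_le x (Finset.mem_univ i)
  have hbu : ∀ i, x i ≤ b := fun i => hb ▸ Finset.le_sup' x (Finset.mem_univ i)
  obtain ⟨j, -, hj⟩ := Finset.exists_mem_eq_sup' hne x
  obtain ⟨k, -, hk⟩ := Finset.exists_mem_eq_inf' hne x
  have hjb : x j = b := (hb.trans hj).symm
  have hka : x k = a := (ha.trans hk).symm
  have hab : a ≤ b := hka ▸ hbu k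
  have s1 : Finset.univ.sup' hne (fun i => |x i - a|) = b - a := by
    apply le_antisymm
    · apply Finset.sup'_le
      intro i _
      rw [abs_le]
      constructor <;> [have := hal i; have := hbu i] <;> linarith
    · have := Finset.le_sup' (fun i => |x i - a|) (Finset.mem_univ j)
      rw [hjb, abs_of_nonneg (by linarith)] at this
      exact this
  have s2 : Finset.univ.sup' hne (fun i => |x i - b|) = b - a := by
    apply le_antisymm
    · apply Finset.sup'_le
      intro i _
      rw [abs_le]
      constructor <;> [have := hal i; have := hbu i] <;> linarith
    · have := Finset.le_sup' (fun i => |x i - b|) (Finset.mem_univ k)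
      rw [hka, abs_of_nonpos (by linarith)] at this
      linarith
  have s3 : Finset.univ.sup' hne (fun i => |x i - (a + b)/2|) = (b - a) / 2 := by
    apply le_antisymm
    · apply Finset.sup'_le
      intro i _
      rw [abs_le]
      constructor <;> [have := hal i; have := hbu i] <;> linarith
    · have := Finset.le_sup' (fun i => |x i - (a + b)/2|) (Finset.mem_univ j)
      rw [hjb, abs_of_nonneg (by linarith)] at this
      linarith
  refine ⟨by rw [s1, s2, s3]; ring, fun y => ?_⟩
  rcases le_or_gt y ((a + b) / 2) with hy | hy
  · have := Finset.le_sup' (fun i => |x i - y|) (Finset.mem_univ j)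
    rw [hjb] at this
    calc (b - a) / 2 ≤ |x j - y| := by rw [hjb, abs_of_nonneg (by linarith)]; linarith
      _ ≤ _ := Finset.le_sup' (fun i => |x i - y|) (Finset.mem_univ j)
  · calc (b - a) / 2 ≤ |x k - y| := by rw [hka, abs_of_nonpos (by linarith)]; linarith
      _ ≤ _ := Finset.le_sup' (fun i => |x i - y|) (Finset.mem_univ k)
end

section
/- Let γ ∈ [0, 1/2] and t ∈ [1/2, 1/2 + γ] be real numbers. Then, in AddCircle 1, (1/4)·dist(t̄, 0̄) + (1/4)·dist(t̄, γ̄) + (1/2)·dist(t̄, (γ/2)‾) ≥ 1/4. (If the agents lie on the arc [0,γ] with extreme points r = 0 and l = γ, and an agent's true location t lies on the short arc between the antipodal points of l and r, then the expected cost of the Left-Right-Middle mechanism applied to the semicircle containing [0,γ] is at least 1/4 for that agent.) -/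
lemma aux_round_dist (x a : ℝ) (h1 : a ≤ x) (h2 : x ≤ 1 - a) :
    a ≤ |x - round x| := by
  rcases le_or_gt a 0 with ha | ha
  · exact ha.trans (abs_nonneg _)
  rcases le_or_gt (round x) 0 with h | h
  · have : (round x : ℝ) ≤ 0 := by exact_mod_cast h
    calc a ≤ x - round x := by linarith
    _ ≤ |x - round x| := le_abs_self _
  · have : (1 : ℝ) ≤ round x := by exact_mod_cast h
    calc a ≤ (round x : ℝ) - x := by linarith
    _ = |(round x : ℝ) - x| := (abs_of_nonneg (by linarith)).symm
    _ = |x - round x| := abs_sub_comm _ _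

lemma aux_dist_s16 (x y a : ℝ) (h1 : a ≤ x - y) (h2 : x - y ≤ 1 - a) :
    a ≤ dist ((x : AddCircle (1 : ℝ))) ((y : AddCircle (1 : ℝ))) := by
  rw [dist_eq_norm, ← AddCircle.coe_sub, AddCircle.norm_eq]
  simpa using aux_round_dist (x - y) a h1 h2

/-- **LRM costs at least 1/4 to an agent on the far arc.** On the circle `ℝ/ℤ` of
circumference 1, suppose the reported agents span the arc `[0, γ]` with `γ ∈ [0, 1/2]`
(extreme points `r = 0` and `l = γ`), and the true location `t` lies on the short arc
`[1/2, 1/2 + γ]` between the antipodes of `l` and `r`. Then the expected cost of the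
Left-Right-Middle mechanism to the agent at `t` is at least `1/4`:
`(1/4)·dist t 0 + (1/4)·dist t γ + (1/2)·dist t (γ/2) ≥ 1/4`. -/
theorem lrm_far_agent_cost_ge_quarter (γ t : ℝ)
    (hγ0 : 0 ≤ γ) (hγ : γ ≤ 1/2) (ht0 : 1/2 ≤ t) (ht1 : t ≤ 1/2 + γ) :
    (1/4 : ℝ) ≤
      (1/4) * dist ((t : AddCircle (1 : ℝ))) (((0 : ℝ) : AddCircle (1 : ℝ)))
      + (1/4) * dist ((t : AddCircle (1 : ℝ))) ((γ : AddCircle (1 : ℝ)))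
      + (1/2) * dist ((t : AddCircle (1 : ℝ))) (((γ / 2 : ℝ) : AddCircle (1 : ℝ))) := by
  have h1 := aux_dist_s16 t 0 (1 - t) (by linarith) (by linarith)
  have h2 := aux_dist_s16 t γ (t - γ) (by linarith) (by linarith)
  have h3 := aux_dist_s16 t (γ/2) (1/2 - γ/2) (by linarith) (by linarith)
  linarith
end
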